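/- arXiv:1603.00510 — 2 statements merged into one kernel-verified Lean document; each statement's English description precedes it below -/
import Mathlib

section
/- The maps σ₋(z), σ̄₋(z): B_∞ → B_∞[z^{−1}] are ring homomorphisms, and they are mutually inverse when regarded as elements of End_ℤ(B_∞)[[z^{−1}]]. In particular, for every finite family (i_1,…,i_s) ∈ ℕ^s one has σ₋(z)(h_{i_1}⋯h_{i_s}) = σ₋(z)h_{i_1} ⋯ σ₋(z)h_{i_s} and σ̄₋(z)(h_{i_1}⋯h_{i_s}) = σ̄₋(z)h_{i_1} ⋯ σ̄₋(z)h_{i_s}. -/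
/-- `B_∞ = ℤ[e₁,e₂,…]`, the polynomial ring in countably many variables
(`X i` is `e_{i+1}`). -/
abbrev Binf : Type := MvPolynomial ℕ ℤ

/-- `E_∞(z) = Σ_{i≥0} (-1)^i e_i z^i` (with `e₀ = 1`). -/
noncomputable def Einf : PowerSeries Binf :=
  PowerSeries.mk fun i => if i = 0 then 1 else (-1 : Binf) ^ i * MvPolynomial.X (i - 1)

/-- The coefficient `(-1)^k e_k` of `z^k` in `E_∞(z)`. -/
noncomputable def einf (k : ℕ) : Binf := PowerSeries.coeff k Einf

/-- The elements `h_n ∈ B_∞` (for `n : ℤ`, `h_n = 0` for `n < 0`), defined by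
`Σ_{n≥0} h_n z^n = 1/E_∞(z)`. -/
noncomputable def hinf (n : ℤ) : Binf :=
  if 0 ≤ n then PowerSeries.coeff n.toNat (Einf.invOfUnit 1) else 0

/-- The Schur determinant `Δ_λ(H_∞) = det(h_{λ_j-j+i})_{1≤i,j≤r}` for a partition `λ`
with (at most) `r` parts. -/
noncomputable def schurInf (r : ℕ) (lam : Fin r → ℕ) : Binf :=
  Matrix.det (fun i j : Fin r => hinf ((lam j : ℤ) - (j : ℤ) + (i : ℤ)))

/-- `σ₋(z) h_n = Σ_{j=0}^n h_{n-j} z^{-j}`, as a polynomial in `X = z⁻¹` over `B_∞`. -/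
noncomputable def smHinf (n : ℤ) : Polynomial Binf :=
  if 0 ≤ n then
    ∑ j ∈ Finset.range (n.toNat + 1), Polynomial.C (hinf (n - j)) * Polynomial.X ^ j
  else 0

/-- `σ̄₋(z) h_n = h_n - h_{n-1} z⁻¹`, as a polynomial in `X = z⁻¹` over `B_∞`. -/
noncomputable def sbmHinf (n : ℤ) : Polynomial Binf :=
  Polynomial.C (hinf n) - Polynomial.C (hinf (n - 1)) * Polynomial.X


noncomputable section SigmaAux

/-- `e_k` for integer `k` (`e_0 = 1`, `e_k = 0` for `k < 0`). -/
def eE (k : ℤ) : Binf := if k < 0 then 0 else if k = 0 then 1 else MvPolynomial.X (k.toNat - 1)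

/-- `(-1)^k e_k` for integer `k`, `0` for `k < 0`. -/
def einfZ (k : ℤ) : Binf := if k < 0 then 0 else (-1) ^ k.toNat * eE k

/-- The power series `H = Σ h_n z^n`. -/
def Hser : PowerSeries Binf := Einf.invOfUnit 1

lemma einf_eq (k : ℕ) : einf k = einfZ k := by
  simp only [einf, Einf, PowerSeries.coeff_mk, einfZ, eE]
  rcases k with _ | k
  · norm_num
  · have h1 : ¬ ((k+1 : ℤ) < 0) := by omega
    have h2 : ((k+1 : ℤ)).toNat = k + 1 := by omega
    have h3 : ¬ ((k+1 : ℤ) = 0) := by omega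
    simp [h1, h2, h3]

lemma constCoeff_Einf : PowerSeries.constantCoeff (R := Binf) Einf = 1 := by
  simp [Einf, ← PowerSeries.coeff_zero_eq_constantCoeff_apply]

lemma Einf_mul_Hser : Einf * Hser = 1 :=
  PowerSeries.mul_invOfUnit _ _ (by simp [constCoeff_Einf])

lemma hinf_nonneg (n : ℕ) : hinf n = PowerSeries.coeff n Hser := by
  simp [hinf, Hser]

lemma hinf_neg {n : ℤ} (h : n < 0) : hinf n = 0 := by
  simp [hinf, not_le.2 h]

lemma hinf_zero : hinf 0 = 1 := by
  have := congrArg (PowerSeries.constantCoeff (R := Binf)) Einf_mul_Hser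
  rw [map_mul, constCoeff_Einf, one_mul, map_one] at this
  rw [hinf, if_pos le_rfl, Int.toNat_zero, PowerSeries.coeff_zero_eq_constantCoeff]
  exact this

end SigmaAux

noncomputable section SigmaAux2

/-- `σ₋` as a ring hom: `e_{i+1} ↦ e_{i+1} + e_i z⁻¹`. -/
def phiH : Binf →+* Polynomial Binf :=
  MvPolynomial.eval₂Hom (Int.castRingHom (Polynomial Binf))
    (fun i => Polynomial.C (MvPolynomial.X i) + Polynomial.C (eE i) * Polynomial.X)

/-- `σ̄₋` as a ring hom: `e_k ↦ Σ_{j=0}^k (-1)^j e_{k-j} z^{-j}` (`k = i+1`). -/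
def psiH : Binf →+* Polynomial Binf :=
  MvPolynomial.eval₂Hom (Int.castRingHom (Polynomial Binf))
    (fun i => ∑ j ∈ Finset.range (i + 2),
      Polynomial.C ((-1) ^ j * eE ((i : ℤ) + 1 - j)) * Polynomial.X ^ j)

lemma eE_neg {k : ℤ} (h : k < 0) : eE k = 0 := by simp [eE, h]

lemma eE_zero : eE 0 = 1 := by simp [eE]

lemma einfZ_neg {k : ℤ} (h : k < 0) : einfZ k = 0 := by simp [einfZ, h]

lemma einfZ_zero : einfZ 0 = 1 := by simp [einfZ, eE_zero]

lemma phiH_eE (k : ℤ) :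
    phiH (eE k) = Polynomial.C (eE k) + Polynomial.C (eE (k - 1)) * Polynomial.X := by
  rcases lt_trichotomy k 0 with h | h | h
  · rw [eE_neg h, eE_neg (show k - 1 < 0 by omega), map_zero]
    simp
  · subst h
    rw [eE_zero, eE_neg (show (0:ℤ) - 1 < 0 by omega), map_one, map_one, map_zero]
    simp
  · have h1 : ¬ (k < 0) := by omega
    have h2 : ¬ (k = 0) := by omega
    rw [eE, if_neg h1, if_neg h2]
    have h3 : phiH (MvPolynomial.X (k.toNat - 1)) =
        Polynomial.C (MvPolynomial.X (k.toNat - 1)) +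
          Polynomial.C (eE ((k.toNat - 1 : ℕ) : ℤ)) * Polynomial.X := by
      simp [phiH]
    have h4 : ((k.toNat - 1 : ℕ) : ℤ) = k - 1 := by omega
    rw [h3, h4]

lemma phiH_einfZ (k : ℤ) (hk : 0 ≤ k) :
    phiH (einfZ k) = Polynomial.C (einfZ k) - Polynomial.C (einfZ (k - 1)) * Polynomial.X := by
  rw [einfZ, if_neg (by omega), map_mul, phiH_eE, map_pow, map_neg, map_one]
  rcases eq_or_lt_of_le hk with h | h
  · rw [← h]
    simp [eE_neg, einfZ_neg, eE_zero, einfZ_zero]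
  · have h2 : k.toNat = (k-1).toNat + 1 := by omega
    have h5 : einfZ (k-1) = (-1) ^ ((k-1).toNat) * eE (k-1) := by
      rw [einfZ, if_neg (show ¬ (k - 1 < 0) by omega)]
    rw [h2, h5, map_mul, map_mul, map_pow, map_pow]
    simp only [map_neg, map_one]
    ring

/-- geometric series `Σ z^{-n} w^n`. -/
def geo : PowerSeries (Polynomial Binf) := PowerSeries.mk fun n => Polynomial.X ^ n

lemma coeff_mul_CX_zero {R : Type*} [CommRing R] (f : PowerSeries R) (a : R) :
    PowerSeries.coeff 0 (f * (PowerSeries.C a * PowerSeries.X)) = 0 := by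
  rw [show f * (PowerSeries.C a * PowerSeries.X) = (f * PowerSeries.C a) * PowerSeries.X by
    ring, PowerSeries.coeff_zero_mul_X]

lemma coeff_mul_CX_succ {R : Type*} [CommRing R] (f : PowerSeries R) (a : R) (n : ℕ) :
    PowerSeries.coeff (n+1) (f * (PowerSeries.C a * PowerSeries.X)) =
      PowerSeries.coeff n f * a := by
  rw [show f * (PowerSeries.C a * PowerSeries.X) = (f * PowerSeries.C a) * PowerSeries.X by
    ring, PowerSeries.coeff_succ_mul_X, PowerSeries.coeff_mul_C]

lemma one_sub_mul_geo :
    (1 - PowerSeries.C (R := Polynomial Binf) Polynomial.X * PowerSeries.X) * geo = 1 := by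
  have : (1 - PowerSeries.C (R := Polynomial Binf) Polynomial.X * PowerSeries.X) * geo =
      geo - geo * (PowerSeries.C (R := Polynomial Binf) Polynomial.X * PowerSeries.X) := by ring
  rw [this]
  ext n
  rcases n with _ | n
  · rw [map_sub, coeff_mul_CX_zero]
    simp [geo]
  · rw [map_sub, coeff_mul_CX_succ]
    simp [geo, pow_succ, PowerSeries.coeff_one]

lemma inv_unique' {R : Type*} [CommRing R] {a b c : PowerSeries R}
    (h1 : a * b = 1) (h2 : a * c = 1) : b = c := by
  calc b = b * (a * c) := by rw [h2, mul_one]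
    _ = (a * b) * c := by ring
    _ = c := by rw [h1, one_mul]

lemma coeff_Einf (n : ℕ) : PowerSeries.coeff n Einf = einf n := rfl

lemma map_phiH_Einf :
    PowerSeries.map phiH Einf = PowerSeries.map (Polynomial.C (R := Binf)) Einf *
      (1 - PowerSeries.C (R := Polynomial Binf) Polynomial.X * PowerSeries.X) := by
  have : PowerSeries.map (Polynomial.C (R := Binf)) Einf *
      (1 - PowerSeries.C (R := Polynomial Binf) Polynomial.X * PowerSeries.X) =
      PowerSeries.map (Polynomial.C (R := Binf)) Einf -
      PowerSeries.map (Polynomial.C (R := Binf)) Einf *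
        (PowerSeries.C (R := Polynomial Binf) Polynomial.X * PowerSeries.X) := by ring
  rw [this]
  refine PowerSeries.ext fun n => ?_
  rcases n with _ | n
  · rw [map_sub, coeff_mul_CX_zero, PowerSeries.coeff_map, PowerSeries.coeff_map, coeff_Einf]
    simp only [einf_eq, Nat.cast_zero, sub_zero]
    rw [phiH_einfZ 0 le_rfl, einfZ_neg (show (0:ℤ) - 1 < 0 by omega)]
    simp
  · rw [map_sub, coeff_mul_CX_succ, PowerSeries.coeff_map, PowerSeries.coeff_map,
      PowerSeries.coeff_map, coeff_Einf, coeff_Einf, einf_eq, einf_eq,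
      phiH_einfZ _ (by positivity)]
    have h4 : ((n+1 : ℕ) : ℤ) - 1 = (n : ℤ) := by omega
    rw [h4]

end SigmaAux2

noncomputable section SigmaAux3

lemma map_phiH_Hser :
    PowerSeries.map phiH Hser = geo * PowerSeries.map (Polynomial.C (R := Binf)) Hser := by
  apply inv_unique' (a := PowerSeries.map phiH Einf)
  · rw [← RingHom.map_mul, Einf_mul_Hser, map_one]
  · rw [map_phiH_Einf]
    calc PowerSeries.map (Polynomial.C (R := Binf)) Einf *
          (1 - PowerSeries.C (R := Polynomial Binf) Polynomial.X * PowerSeries.X) *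
          (geo * PowerSeries.map (Polynomial.C (R := Binf)) Hser)
        = (PowerSeries.map (Polynomial.C (R := Binf)) Einf *
            PowerSeries.map (Polynomial.C (R := Binf)) Hser) *
          ((1 - PowerSeries.C (R := Polynomial Binf) Polynomial.X * PowerSeries.X) * geo) := by ring
      _ = 1 := by rw [one_sub_mul_geo, ← RingHom.map_mul, Einf_mul_Hser, map_one, mul_one]

lemma phiH_hinf (n : ℤ) : phiH (hinf n) = smHinf n := by
  rcases lt_or_ge n 0 with h | h
  · rw [hinf_neg h, map_zero, smHinf, if_neg (not_le.2 h)]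
  · obtain ⟨m, rfl⟩ : ∃ m : ℕ, n = (m : ℤ) := ⟨n.toNat, by omega⟩
    have h1 : phiH (hinf (m:ℤ)) =
        PowerSeries.coeff m (PowerSeries.map phiH Hser) := by
      rw [PowerSeries.coeff_map, hinf_nonneg]
    rw [h1, map_phiH_Hser, PowerSeries.coeff_mul]
    have h2 : ∀ p : ℕ × ℕ,
        PowerSeries.coeff p.1 geo *
          PowerSeries.coeff p.2 (PowerSeries.map (Polynomial.C (R := Binf)) Hser) =
        Polynomial.X ^ p.1 * Polynomial.C (PowerSeries.coeff p.2 Hser) := by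
      intro p; rw [PowerSeries.coeff_map]; simp [geo]
    rw [Finset.sum_congr rfl fun p _ => h2 p,
      Finset.Nat.sum_antidiagonal_eq_sum_range_succ_mk]
    rw [smHinf, if_pos (by positivity), Int.toNat_natCast]
    refine Finset.sum_congr rfl fun j hj => ?_
    have hj' : j ≤ m := by simpa [Nat.lt_succ_iff] using hj
    have : hinf ((m : ℤ) - (j : ℤ)) = PowerSeries.coeff (m - j) Hser := by
      rw [show (m : ℤ) - (j : ℤ) = ((m - j : ℕ) : ℤ) by omega, hinf_nonneg]
    rw [this, mul_comm]

lemma eE_succ (i : ℕ) : eE ((i : ℤ) + 1) = MvPolynomial.X i := by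
  have h1 : ¬ ((i : ℤ) + 1 < 0) := by omega
  have h2 : ¬ ((i : ℤ) + 1 = 0) := by omega
  rw [eE, if_neg h1, if_neg h2]
  congr 1

lemma psiH_einfZ (k : ℕ) : psiH (einfZ k) =
    ∑ j ∈ Finset.range (k + 1), Polynomial.C (einfZ ((k : ℤ) - (j : ℤ))) * Polynomial.X ^ j := by
  rcases k with _ | i
  · simp [einfZ_zero]
  · have h1 : einfZ ((i+1 : ℕ) : ℤ) = (-1) ^ (i+1) * MvPolynomial.X i := by
      rw [einfZ, if_neg (by omega)]
      rw [show (((i+1 : ℕ) : ℤ)) = (i : ℤ) + 1 by push_cast; ring, eE_succ]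
      congr 1
    have h2 : psiH (MvPolynomial.X i) = ∑ j ∈ Finset.range (i + 2),
        Polynomial.C ((-1) ^ j * eE ((i : ℤ) + 1 - j)) * Polynomial.X ^ j := by
      simp [psiH]
    rw [h1, map_mul, map_pow, map_neg, map_one, h2, Finset.mul_sum]
    refine Finset.sum_congr rfl fun j hj => ?_
    have hj' : j ≤ i + 1 := by simpa [Nat.lt_succ_iff] using hj
    have hsub : (((i+1 : ℕ) : ℤ)) - (j : ℤ) = (i : ℤ) + 1 - j := by push_cast; ring
    obtain ⟨d, hd⟩ : ∃ d, i + 1 = d + j := ⟨i + 1 - j, by omega⟩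
    have hE : einfZ ((i : ℤ) + 1 - j) = (-1) ^ d * eE ((i : ℤ) + 1 - j) := by
      rw [einfZ, if_neg (by omega)]
      congr 2
      omega
    rw [hsub, hE, hd, pow_add]
    simp only [map_mul, map_pow, map_neg, map_one]
    have hsq : ((-1 : Polynomial Binf)) ^ j * (-1) ^ j = 1 := by
      rw [← mul_pow]; norm_num
    linear_combination ((-1 : Polynomial Binf)) ^ d *
      Polynomial.C (eE ((i : ℤ) + 1 - j)) * Polynomial.X ^ j * hsq

end SigmaAux3

noncomputable section SigmaAux4

lemma map_psiH_Einf :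
    PowerSeries.map psiH Einf = PowerSeries.map (Polynomial.C (R := Binf)) Einf * geo := by
  refine PowerSeries.ext fun k => ?_
  rw [PowerSeries.coeff_map, coeff_Einf, einf_eq, psiH_einfZ, PowerSeries.coeff_mul]
  have h2 : ∀ p : ℕ × ℕ,
      PowerSeries.coeff p.1 (PowerSeries.map (Polynomial.C (R := Binf)) Einf) *
        PowerSeries.coeff p.2 geo =
      Polynomial.C (einf p.1) * Polynomial.X ^ p.2 := by
    intro p; rw [PowerSeries.coeff_map, coeff_Einf]; simp [geo]
  rw [Finset.sum_congr rfl fun p _ => h2 p, Finset.Nat.sum_antidiagonal_eq_sum_range_succ_mk,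
    ← Finset.sum_range_reflect (fun l => Polynomial.C (einf l) * Polynomial.X ^ (k - l)) (k+1)]
  refine Finset.sum_congr rfl fun j hj => ?_
  have hj' : j ≤ k := by simpa [Nat.lt_succ_iff] using hj
  rw [show k + 1 - 1 - j = k - j from by omega, show k - (k - j) = j from by omega,
    show ((k:ℤ) - (j:ℤ)) = ((k - j : ℕ) : ℤ) from by omega, ← einf_eq]

lemma map_psiH_Hser :
    PowerSeries.map psiH Hser = PowerSeries.map (Polynomial.C (R := Binf)) Hser *
      (1 - PowerSeries.C (R := Polynomial Binf) Polynomial.X * PowerSeries.X) := by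
  apply inv_unique' (a := PowerSeries.map psiH Einf)
  · rw [← RingHom.map_mul, Einf_mul_Hser, map_one]
  · rw [map_psiH_Einf]
    calc PowerSeries.map (Polynomial.C (R := Binf)) Einf * geo *
          (PowerSeries.map (Polynomial.C (R := Binf)) Hser *
            (1 - PowerSeries.C (R := Polynomial Binf) Polynomial.X * PowerSeries.X))
        = (PowerSeries.map (Polynomial.C (R := Binf)) Einf *
            PowerSeries.map (Polynomial.C (R := Binf)) Hser) *
          ((1 - PowerSeries.C (R := Polynomial Binf) Polynomial.X * PowerSeries.X) * geo) := by ring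
      _ = 1 := by rw [one_sub_mul_geo, ← RingHom.map_mul, Einf_mul_Hser, map_one, mul_one]

lemma psiH_hinf (n : ℤ) : psiH (hinf n) = sbmHinf n := by
  rcases lt_or_ge n 0 with h | h
  · rw [hinf_neg h, map_zero, sbmHinf, hinf_neg h, hinf_neg (show n - 1 < 0 by omega)]
    simp
  · obtain ⟨m, rfl⟩ : ∃ m : ℕ, n = (m : ℤ) := ⟨n.toNat, by omega⟩
    have h1 : psiH (hinf (m:ℤ)) =
        PowerSeries.coeff m (PowerSeries.map psiH Hser) := by
      rw [PowerSeries.coeff_map, hinf_nonneg]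
    have h0 : PowerSeries.map (Polynomial.C (R := Binf)) Hser *
        (1 - PowerSeries.C (R := Polynomial Binf) Polynomial.X * PowerSeries.X) =
        PowerSeries.map (Polynomial.C (R := Binf)) Hser -
          PowerSeries.map (Polynomial.C (R := Binf)) Hser *
            (PowerSeries.C (R := Polynomial Binf) Polynomial.X * PowerSeries.X) := by ring
    rw [h1, map_psiH_Hser, h0]
    rcases m with _ | m
    · rw [map_sub, coeff_mul_CX_zero, PowerSeries.coeff_map, sub_zero, sbmHinf,
        hinf_neg (show (((0:ℕ):ℤ)) - 1 < 0 from by omega), map_zero, zero_mul, sub_zero,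
        hinf_nonneg]
    · rw [map_sub, coeff_mul_CX_succ, PowerSeries.coeff_map, PowerSeries.coeff_map, sbmHinf,
        show (((m+1:ℕ):ℤ)) - 1 = ((m:ℕ) : ℤ) from by omega, hinf_nonneg, hinf_nonneg]

end SigmaAux4

noncomputable section SigmaAux5

lemma psiH_X (i : ℕ) : psiH (MvPolynomial.X i) = ∑ j ∈ Finset.range (i + 2),
    Polynomial.C ((-1) ^ j * eE ((i : ℤ) + 1 - j)) * Polynomial.X ^ j := by
  simp [psiH]

lemma phiH_X (i : ℕ) : phiH (MvPolynomial.X i) =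
    Polynomial.C (MvPolynomial.X i) + Polynomial.C (eE i) * Polynomial.X := by
  simp [phiH]

/-- telescoping auxiliary family. -/
def Ftel (i j : ℕ) : Polynomial Binf :=
  (-1 : Polynomial Binf) ^ j * Polynomial.C (eE ((i : ℤ) + 1 - j)) * Polynomial.X ^ j

/-- second telescoping auxiliary family. -/
def Gtel (i j : ℕ) : Polynomial Binf :=
  Polynomial.C ((-1) ^ j * eE ((i : ℤ) + 1 - j)) * Polynomial.X ^ j

lemma comp_phi_psi :
    (Polynomial.eval₂RingHom phiH Polynomial.X).comp psiH =
      (Polynomial.C : Binf →+* Polynomial Binf) := by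
  apply MvPolynomial.ringHom_ext
  · intro c
    rw [eq_intCast (MvPolynomial.C : ℤ →+* Binf) c, map_intCast, map_intCast]
  · intro i
    rw [RingHom.comp_apply, psiH_X, map_sum]
    have hterm : ∀ j : ℕ, (Polynomial.eval₂RingHom phiH Polynomial.X)
        (Polynomial.C ((-1) ^ j * eE ((i : ℤ) + 1 - j)) * Polynomial.X ^ j)
        = Ftel i j - Ftel i (j + 1) := by
      intro j
      rw [map_mul, map_pow]
      simp only [Polynomial.coe_eval₂RingHom, Polynomial.eval₂_C, Polynomial.eval₂_X]
      rw [map_mul phiH, map_pow, map_neg, map_one, phiH_eE]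
      simp only [Ftel]
      rw [show ((i : ℤ) + 1 - ((j + 1 : ℕ) : ℤ)) = (i : ℤ) + 1 - j - 1 by push_cast; ring]
      rw [pow_succ, pow_succ]
      ring
    rw [Finset.sum_congr rfl fun j _ => hterm j, Finset.sum_range_sub' (Ftel i) (i + 2)]
    have h0 : Ftel i 0 = Polynomial.C (MvPolynomial.X i) := by
      simp only [Ftel, pow_zero, one_mul, Nat.cast_zero, sub_zero, mul_one]
      rw [eE_succ]
    have h1 : Ftel i (i + 2) = 0 := by
      simp only [Ftel]
      rw [eE_neg (show (i : ℤ) + 1 - ((i + 2 : ℕ) : ℤ) < 0 by push_cast; omega)]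
      simp
    rw [h0, h1, sub_zero]

lemma psiH_eE (k : ℤ) (hk : 0 ≤ k) : psiH (eE k) = ∑ j ∈ Finset.range (k.toNat + 1),
    Polynomial.C ((-1) ^ j * eE (k - j)) * Polynomial.X ^ j := by
  rcases eq_or_lt_of_le hk with h | h
  · rw [← h, eE_zero, map_one]
    simp [eE_zero]
  · obtain ⟨i, rfl⟩ : ∃ i : ℕ, k = (i : ℤ) + 1 := ⟨(k - 1).toNat, by omega⟩
    rw [eE_succ, psiH_X, show ((i : ℤ) + 1).toNat + 1 = i + 2 by omega]

lemma comp_psi_phi :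
    (Polynomial.eval₂RingHom psiH Polynomial.X).comp phiH =
      (Polynomial.C : Binf →+* Polynomial Binf) := by
  apply MvPolynomial.ringHom_ext
  · intro c
    rw [eq_intCast (MvPolynomial.C : ℤ →+* Binf) c, map_intCast, map_intCast]
  · intro i
    rw [RingHom.comp_apply, phiH_X, map_add, map_mul]
    simp only [Polynomial.coe_eval₂RingHom, Polynomial.eval₂_C, Polynomial.eval₂_X]
    rw [psiH_X, psiH_eE (i : ℤ) (by positivity)]
    have h1 : ∑ j ∈ Finset.range (i + 2),
        Polynomial.C ((-1) ^ j * eE ((i : ℤ) + 1 - j)) * Polynomial.X ^ j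
        = ∑ j ∈ Finset.range (i + 1), Gtel i (j + 1) + Gtel i 0 := by
      rw [← Finset.sum_range_succ' (Gtel i) (i + 1)]
      rfl
    have h2 : (∑ j ∈ Finset.range ((i:ℤ).toNat + 1),
        Polynomial.C ((-1) ^ j * eE ((i:ℤ) - j)) * Polynomial.X ^ j) * Polynomial.X
        = ∑ j ∈ Finset.range (i + 1), (- Gtel i (j + 1)) := by
      rw [Int.toNat_natCast, Finset.sum_mul]
      refine Finset.sum_congr rfl fun j _ => ?_
      rw [Gtel]
      rw [show ((i : ℤ) + 1 - ((j + 1 : ℕ) : ℤ)) = (i : ℤ) - j by push_cast; ring,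
        pow_succ, pow_succ]
      simp only [map_mul, map_neg, map_one]
      ring
    rw [h1, h2, add_assoc, add_comm (Gtel i 0), ← add_assoc, ← Finset.sum_add_distrib]
    have h3 : (∑ j ∈ Finset.range (i+1), (Gtel i (j+1) + -Gtel i (j+1))) =
        (∑ j ∈ Finset.range (i+1), (0 : Polynomial Binf)) :=
      Finset.sum_congr rfl fun j _ => by ring
    rw [h3, Finset.sum_const, smul_zero, zero_add]
    simp only [Gtel, pow_zero, one_mul, Nat.cast_zero, sub_zero, mul_one]
    rw [eE_succ]

end SigmaAux5

noncomputable section SigmaAux6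

lemma coeff_eval₂ (f : Binf →+* Polynomial Binf) (q : Polynomial Binf) (n : ℕ) :
    (Polynomial.eval₂ f Polynomial.X q).coeff n =
      ∑ ij ∈ Finset.HasAntidiagonal.antidiagonal n, (f (q.coeff ij.2)).coeff ij.1 := by
  classical
  set g : ℕ → Binf := fun i => if i ≤ n then (f (q.coeff i)).coeff (n - i) else 0 with hg
  have lhs1 : (Polynomial.eval₂ f Polynomial.X q).coeff n
      = ∑ i ∈ Finset.range (q.natDegree + 1), g i := by
    rw [Polynomial.eval₂_eq_sum_range, Polynomial.finset_sum_coeff]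
    exact Finset.sum_congr rfl fun i _ => by rw [Polynomial.coeff_mul_X_pow']
  set M : ℕ := Nat.max q.natDegree n with hM
  have e1 : ∀ i ∈ Finset.range (M + 1), i ∉ Finset.range (q.natDegree + 1) → g i = 0 := by
    intro i _ hi
    have hi2 : q.natDegree < i := by simpa [Nat.lt_succ_iff] using hi
    have : q.coeff i = 0 := Polynomial.coeff_eq_zero_of_natDegree_lt hi2
    rw [hg]
    simp [this]
  have e2 : ∀ i ∈ Finset.range (M + 1), i ∉ Finset.range (n + 1) → g i = 0 := by
    intro i _ hi
    have hi2 : ¬ (i ≤ n) := by simpa [Nat.lt_succ_iff] using hi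
    rw [hg]
    simp [hi2]
  have lhs2 : ∑ i ∈ Finset.range (q.natDegree + 1), g i = ∑ i ∈ Finset.range (M + 1), g i :=
    Finset.sum_subset (Finset.range_subset_range.2 (Nat.succ_le_succ (Nat.le_max_left _ _))) e1
  have rhs2 : ∑ i ∈ Finset.range (n + 1), g i = ∑ i ∈ Finset.range (M + 1), g i :=
    Finset.sum_subset (Finset.range_subset_range.2 (Nat.succ_le_succ (Nat.le_max_right _ _))) e2
  rw [lhs1, lhs2, ← rhs2, Finset.Nat.sum_antidiagonal_eq_sum_range_succ_mk,
    ← Finset.sum_range_reflect (fun k => (f (q.coeff (n - k))).coeff k) (n + 1)]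
  refine Finset.sum_congr rfl fun i hi => ?_
  have hi' : i ≤ n := by simpa [Nat.lt_succ_iff] using hi
  rw [hg]
  simp only [if_pos hi']
  rw [show n + 1 - 1 - i = n - i from by omega, show n - (n - i) = i from by omega]

lemma conv_phi_psi (n : ℕ) (p : Binf) :
    (∑ ij ∈ Finset.HasAntidiagonal.antidiagonal n, (phiH ((psiH p).coeff ij.2)).coeff ij.1)
      = if n = 0 then p else 0 := by
  rw [← coeff_eval₂ phiH (psiH p) n]
  have h := RingHom.congr_fun comp_phi_psi p
  rw [RingHom.comp_apply] at h
  have h' : Polynomial.eval₂ phiH Polynomial.X (psiH p) = Polynomial.C p := h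
  rw [h', Polynomial.coeff_C]

lemma conv_psi_phi (n : ℕ) (p : Binf) :
    (∑ ij ∈ Finset.HasAntidiagonal.antidiagonal n, (psiH ((phiH p).coeff ij.2)).coeff ij.1)
      = if n = 0 then p else 0 := by
  rw [← coeff_eval₂ psiH (phiH p) n]
  have h := RingHom.congr_fun comp_psi_phi p
  rw [RingHom.comp_apply] at h
  have h' : Polynomial.eval₂ psiH Polynomial.X (phiH p) = Polynomial.C p := h
  rw [h', Polynomial.coeff_C]

end SigmaAux6

noncomputable section SigmaAux7

/-- The `ℤ`-span of the Schur determinants for partitions. -/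
def Msub : Submodule ℤ Binf :=
  Submodule.span ℤ {x | ∃ (r : ℕ) (lam : Fin r → ℕ), Antitone lam ∧ x = schurInf r lam}

/-- Weight of an exponent vector, with base `r+2`. -/
def Wt (r : ℕ) (μ : Fin r → ℕ) : ℕ := ∑ j, (r + 2) ^ (μ j)

lemma wt_bound (r n : ℕ) (μ : Fin r → ℕ) (hsum : ∑ j, μ j = n) :
    Wt r μ ≤ r * (r + 2) ^ n := by
  have h1 : ∀ j, μ j ≤ n := fun j =>
    hsum ▸ Finset.single_le_sum (fun i _ => Nat.zero_le _) (Finset.mem_univ j)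
  calc Wt r μ ≤ ∑ _j : Fin r, (r+2)^n :=
        Finset.sum_le_sum fun j _ => Nat.pow_le_pow_right (by omega) (h1 j)
    _ = r * (r+2)^n := by
        rw [Finset.sum_const, Finset.card_univ, Fintype.card_fin, smul_eq_mul]

lemma wt_lt (r : ℕ) (lam : Fin r → ℕ) (hA : Antitone lam) (σ : Equiv.Perm (Fin r)) (hσ : σ ≠ 1)
    (ν : Fin r → ℕ) (hν : ∀ i, (ν i : ℤ) = (lam i : ℤ) - (i : ℤ) + ((σ i : ℕ) : ℤ)) :
    Wt r lam < Wt r ν := by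
  classical
  have hne : (Finset.univ.filter (fun i : Fin r => σ i ≠ i)).Nonempty := by
    by_contra h
    rw [Finset.not_nonempty_iff_eq_empty] at h
    apply hσ
    apply Equiv.ext
    intro i
    by_contra hi
    have hmem : i ∈ Finset.univ.filter (fun i => σ i ≠ i) := by
      simp only [Finset.mem_filter, Finset.mem_univ, true_and]
      simpa using hi
    rw [h] at hmem
    exact absurd hmem (Finset.notMem_empty i)
  set k := (Finset.univ.filter (fun i : Fin r => σ i ≠ i)).min' hne with hk
  have hkmem : σ k ≠ k := by
    have h := Finset.min'_mem _ hne
    rw [← hk] at h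
    simpa using h
  have hfix : ∀ j, j < k → σ j = j := by
    intro j hj
    by_contra hjne
    have hjmem : j ∈ Finset.univ.filter (fun i => σ i ≠ i) := by
      simp only [Finset.mem_filter, Finset.mem_univ, true_and]
      exact hjne
    exact absurd (Finset.min'_le _ j hjmem) (not_le.2 hj)
  have hklt : k < σ k := by
    by_contra h
    push_neg at h
    have h2 : σ k < k := lt_of_le_of_ne h hkmem
    have h3 : σ (σ k) = σ k := hfix _ h2
    have h4 := congrArg σ.symm h3
    simp only [Equiv.symm_apply_apply] at h4
    exact hkmem h4
  have hvk : ((k : ℕ) : ℤ) < (((σ k) : ℕ) : ℤ) := by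
    exact_mod_cast (Fin.lt_def.mp hklt)
  have hνk : lam k + 1 ≤ ν k := by
    have h := hν k
    omega
  have hνj : ∀ j, j < k → ν j = lam j := by
    intro j hj
    have h := hν j
    rw [hfix j hj] at h
    omega
  have hsplit : ∀ f : Fin r → ℕ, (∑ j, f j) =
      (∑ j ∈ Finset.univ.filter (fun j => j < k), f j) +
      (∑ j ∈ Finset.univ.filter (fun j => ¬ j < k), f j) :=
    fun f => (Finset.sum_filter_add_sum_filter_not _ _ _).symm
  rw [Wt, Wt, hsplit (fun j => (r+2)^(lam j)), hsplit (fun j => (r+2)^(ν j))]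
  have heq : (∑ j ∈ Finset.univ.filter (fun j => j < k), (r+2)^(lam j)) =
      (∑ j ∈ Finset.univ.filter (fun j => j < k), (r+2)^(ν j)) := by
    refine Finset.sum_congr rfl fun j hj => ?_
    rw [hνj j (by simpa using hj)]
  have hx : 0 < (r+2)^(lam k) := pow_pos (by omega) _
  have hlt : (∑ j ∈ Finset.univ.filter (fun j => ¬ j < k), (r+2)^(lam j)) <
      (∑ j ∈ Finset.univ.filter (fun j => ¬ j < k), (r+2)^(ν j)) := by
    have hkin : k ∈ Finset.univ.filter (fun j : Fin r => ¬ j < k) := by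
      simp [lt_irrefl]
    calc (∑ j ∈ Finset.univ.filter (fun j => ¬ j < k), (r+2)^(lam j))
        ≤ (Finset.univ.filter (fun j : Fin r => ¬ j < k)).card • ((r+2)^(lam k)) := by
          refine Finset.sum_le_card_nsmul _ _ _ fun j hj => ?_
          have hkj : k ≤ j := le_of_not_gt (by simpa using hj)
          exact Nat.pow_le_pow_right (by omega) (hA hkj)
      _ ≤ r * ((r+2)^(lam k)) := by
          rw [smul_eq_mul]
          have hcard : (Finset.univ.filter (fun j : Fin r => ¬ j < k)).card ≤ r := by
            calc _ ≤ Finset.univ.card := Finset.card_filter_le _ _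
              _ = r := by rw [Finset.card_univ, Fintype.card_fin]
          exact Nat.mul_le_mul_right _ hcard
      _ < (r+2) * ((r+2)^(lam k)) := mul_lt_mul_of_pos_right (by omega) hx
      _ = (r+2)^(lam k + 1) := by rw [pow_succ, mul_comm]
      _ ≤ (r+2)^(ν k) := Nat.pow_le_pow_right (by omega) hνk
      _ ≤ _ := Finset.single_le_sum (f := fun j => (r+2)^(ν j)) (fun j _ => Nat.zero_le _) hkin
  omega

end SigmaAux7

noncomputable section SigmaAux8

lemma schurInf_mem (r : ℕ) (lam : Fin r → ℕ) (hA : Antitone lam) : schurInf r lam ∈ Msub :=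
  Submodule.subset_span ⟨r, lam, hA, rfl⟩

lemma schur_expand (r : ℕ) (lam : Fin r → ℕ) :
    schurInf r lam = ∑ σ : Equiv.Perm (Fin r), ((Equiv.Perm.sign σ : ℤ)) •
      ∏ i, hinf ((lam i : ℤ) - (i : ℤ) + ((σ i : ℕ) : ℤ)) := by
  rw [schurInf]
  refine (Matrix.det_apply _).trans ?_
  refine Finset.sum_congr rfl fun σ _ => ?_
  rw [Units.smul_def]

lemma straighten (r n : ℕ) : ∀ (d : ℕ) (μ : Fin r → ℕ), (∑ j, μ j = n) →
    (r * (r + 2) ^ n + 1 - Wt r μ ≤ d) → (∏ j, hinf (μ j : ℤ)) ∈ Msub := by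
  intro d
  induction d with
  | zero =>
    intro μ hsum hd
    exfalso
    have := wt_bound r n μ hsum
    omega
  | succ d ih =>
    intro μ hsum hd
    classical
    have hmono : Monotone (μ ∘ Tuple.sort μ) := Tuple.monotone_sort μ
    set τ : Equiv.Perm (Fin r) := Fin.revPerm.trans (Tuple.sort μ) with hτ
    set lam : Fin r → ℕ := fun j => μ (τ j) with hlam
    have hA : Antitone lam := by
      intro a b hab
      have h1 : Fin.rev b ≤ Fin.rev a := Fin.rev_le_rev.mpr hab
      exact hmono h1
    have hprod : (∏ j, hinf (μ j : ℤ)) = ∏ j, hinf (lam j : ℤ) := by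
      rw [hlam]
      exact (Equiv.prod_comp τ (fun j => hinf (μ j : ℤ))).symm
    have hsuml : ∑ j, lam j = n := by rw [hlam, Equiv.sum_comp τ μ, hsum]
    have hwt : Wt r lam = Wt r μ := by
      rw [Wt, Wt, hlam]
      exact Equiv.sum_comp τ (fun j => (r+2)^(μ j))
    rw [hprod]
    have hid : ((Equiv.Perm.sign (1 : Equiv.Perm (Fin r)) : ℤ)) •
        (∏ i, hinf ((lam i : ℤ) - (i : ℤ) + (((1 : Equiv.Perm (Fin r)) i : ℕ) : ℤ)))
        = ∏ i, hinf (lam i : ℤ) := by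
      rw [map_one, Units.val_one, one_smul]
      refine Finset.prod_congr rfl fun i _ => ?_
      congr 1
      simp only [Equiv.Perm.one_apply]
      omega
    have hmain : (∏ j, hinf (lam j : ℤ)) = schurInf r lam -
        ∑ σ ∈ Finset.univ.erase (1 : Equiv.Perm (Fin r)), ((Equiv.Perm.sign σ : ℤ)) •
          ∏ i, hinf ((lam i : ℤ) - (i : ℤ) + ((σ i : ℕ) : ℤ)) := by
      rw [schur_expand r lam,
        ← Finset.sum_erase_add Finset.univ _ (Finset.mem_univ (1 : Equiv.Perm (Fin r))), hid]
      ring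
    rw [hmain]
    refine Submodule.sub_mem _ (schurInf_mem r lam hA) (Submodule.sum_mem _ fun σ hσp => ?_)
    have hσ1 : σ ≠ 1 := (Finset.mem_erase.mp hσp).1
    by_cases hneg : ∃ i, (lam i : ℤ) - (i : ℤ) + ((σ i : ℕ) : ℤ) < 0
    · obtain ⟨i0, hi0⟩ := hneg
      have hz : (∏ i, hinf ((lam i : ℤ) - (i : ℤ) + ((σ i : ℕ) : ℤ))) = 0 :=
        Finset.prod_eq_zero (Finset.mem_univ i0) (hinf_neg hi0)
      rw [hz, smul_zero]
      exact Submodule.zero_mem _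
    · push_neg at hneg
      set ν : Fin r → ℕ := fun i => ((lam i : ℤ) - (i : ℤ) + ((σ i : ℕ) : ℤ)).toNat with hν
      have hνe : ∀ i, (ν i : ℤ) = (lam i : ℤ) - (i : ℤ) + ((σ i : ℕ) : ℤ) := by
        intro i
        rw [hν]
        exact Int.toNat_of_nonneg (hneg i)
      have hprod2 : (∏ i, hinf ((lam i : ℤ) - (i : ℤ) + ((σ i : ℕ) : ℤ)))
          = ∏ i, hinf (ν i : ℤ) := by
        refine Finset.prod_congr rfl fun i _ => ?_
        rw [hνe]
      have hsumν : ∑ j, ν j = n := by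
        have h2 : ∑ j, ((ν j : ℕ) : ℤ) = ∑ j, ((lam j : ℤ) - (j : ℤ) + ((σ j : ℕ) : ℤ)) :=
          Finset.sum_congr rfl fun j _ => hνe j
        have h3 : ∑ j : Fin r, ((σ j : ℕ) : ℤ) = ∑ j : Fin r, ((j : ℕ) : ℤ) :=
          Equiv.sum_comp σ (fun j => ((j : ℕ) : ℤ))
        have h4 : ∑ j, ((lam j : ℕ) : ℤ) = (n : ℤ) := by
          rw [← hsuml]
          push_cast
          rfl
        have h5 : ∑ j, ((lam j : ℤ) - (j : ℤ) + ((σ j : ℕ) : ℤ)) = (n : ℤ) := by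
          rw [Finset.sum_add_distrib, Finset.sum_sub_distrib, h3, h4]
          ring
        have h6 : ((∑ j, ν j : ℕ) : ℤ) = (n : ℤ) := by
          push_cast
          rw [h2, h5]
        exact_mod_cast h6
      have hwtlt := wt_lt r lam hA σ hσ1 ν hνe
      have hdle : r * (r + 2) ^ n + 1 - Wt r ν ≤ d := by omega
      rw [hprod2]
      exact Submodule.smul_mem _ _ (ih ν hsumν hdle)

lemma straighten' (r : ℕ) (μ : Fin r → ℕ) : (∏ j, hinf (μ j : ℤ)) ∈ Msub :=
  straighten r (∑ j, μ j) _ μ rfl le_rfl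

end SigmaAux8

noncomputable section SigmaAux9

lemma coeff_conv (m : ℕ) :
    (∑ k ∈ Finset.range (m+1), einf k * hinf ((m - k : ℕ) : ℤ)) = if m = 0 then 1 else 0 := by
  have h0 := congrArg (PowerSeries.coeff m) Einf_mul_Hser
  rw [PowerSeries.coeff_mul, PowerSeries.coeff_one] at h0
  rw [← h0, Finset.Nat.sum_antidiagonal_eq_sum_range_succ_mk]
  refine Finset.sum_congr rfl fun k hk => ?_
  rw [coeff_Einf, hinf_nonneg]

lemma einf_mem_adjoin (n : ℕ) :
    einf n ∈ Algebra.adjoin ℤ (Set.range fun k : ℕ => hinf (k : ℤ)) := by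
  induction n using Nat.strong_induction_on with
  | _ n ih =>
    rcases n with _ | m
    · have h1 : einf 0 = 1 := by rw [einf_eq, Nat.cast_zero, einfZ_zero]
      rw [h1]
      exact Subalgebra.one_mem _
    · have hc := coeff_conv (m+1)
      rw [if_neg (Nat.succ_ne_zero m), Finset.sum_range_succ] at hc
      have hlast : hinf (((m+1) - (m+1) : ℕ) : ℤ) = 1 := by
        rw [Nat.sub_self, Nat.cast_zero, hinf_zero]
      rw [hlast, mul_one] at hc
      rw [eq_neg_of_add_eq_zero_right hc]
      exact Subalgebra.neg_mem _ (Subalgebra.sum_mem _ fun k hk =>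
        Subalgebra.mul_mem _ (ih k (by simpa using hk)) (Algebra.subset_adjoin ⟨_, rfl⟩))

lemma adjoin_hinf_top : Algebra.adjoin ℤ (Set.range fun k : ℕ => hinf (k : ℤ)) = ⊤ := by
  rw [eq_top_iff, ← MvPolynomial.adjoin_range_X]
  apply Algebra.adjoin_le
  rintro x ⟨i, rfl⟩
  have h2 : einfZ ((i+1 : ℕ) : ℤ) = (-1 : Binf)^(i+1) * MvPolynomial.X i := by
    rw [einfZ, if_neg (by omega), show (((i+1:ℕ) : ℕ) : ℤ) = (i:ℤ)+1 by push_cast; ring, eE_succ]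
    congr 1
  have h1 : MvPolynomial.X i = (-1 : Binf) ^ (i+1) * einf (i+1) := by
    rw [einf_eq, h2, ← mul_assoc, ← mul_pow]
    norm_num
  rw [h1]
  exact Subalgebra.mul_mem _
    (Subalgebra.pow_mem _ (Subalgebra.neg_mem _ (Subalgebra.one_mem _)) _)
    (einf_mem_adjoin (i+1))

lemma list_lift : ∀ (l : List Binf), (∀ y ∈ l, ∃ k : ℕ, hinf (k:ℤ) = y) →
    ∃ ks : List ℕ, l = ks.map (fun k : ℕ => hinf (k:ℤ)) := by
  intro l
  induction l with
  | nil => exact fun _ => ⟨[], rfl⟩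
  | cons a t ih =>
    intro h
    obtain ⟨k, hk⟩ := h a List.mem_cons_self
    obtain ⟨ks, hks⟩ := ih (fun y hy => h y (List.mem_cons_of_mem _ hy))
    exact ⟨k :: ks, by rw [List.map_cons, hk, ← hks]⟩

lemma listProdMemMsub (ks : List ℕ) : ((ks.map fun k : ℕ => hinf (k:ℤ)).prod) ∈ Msub := by
  have h1 : (ks.map fun k : ℕ => hinf (k:ℤ)) =
      List.ofFn (fun j : Fin ks.length => hinf ((ks.get j : ℕ) : ℤ)) := by
    conv_lhs => rw [← List.ofFn_get ks]
    rw [List.map_ofFn]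
    rfl
  rw [h1, List.prod_ofFn]
  exact straighten' ks.length (fun j => ks.get j)

lemma mem_Msub (p : Binf) : p ∈ Msub := by
  have h3 : p ∈ Algebra.adjoin ℤ (Set.range fun k : ℕ => hinf (k:ℤ)) := by
    rw [adjoin_hinf_top]
    exact Algebra.mem_top
  have h4 : p ∈ Submodule.span ℤ
      ((Submonoid.closure (Set.range fun k : ℕ => hinf (k:ℤ))) : Set Binf) := by
    rw [← Algebra.adjoin_eq_span]
    simpa using h3
  refine Submodule.span_le.2 ?_ h4
  rintro x hx
  obtain ⟨l, hl, rfl⟩ := Submonoid.exists_list_of_mem_closure hx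
  obtain ⟨ks, rfl⟩ := list_lift l (fun y hy => hl y hy)
  exact listProdMemMsub ks

end SigmaAux9

noncomputable section SigmaAux10

lemma phiH_schur (r : ℕ) (lam : Fin r → ℕ) :
    phiH (schurInf r lam) =
      Matrix.det (fun i j : Fin r => smHinf ((lam j : ℤ) - (j : ℤ) + (i : ℤ))) := by
  rw [schurInf]
  refine (RingHom.map_det phiH _).trans ?_
  refine (congrArg Matrix.det (RingHom.mapMatrix_apply phiH _)).trans ?_
  have h : (Matrix.map (fun i j : Fin r => hinf ((lam j : ℤ) - (j : ℤ) + (i : ℤ))) phiH) =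
      (fun i j : Fin r => smHinf ((lam j : ℤ) - (j : ℤ) + (i : ℤ))) := by
    funext i j
    exact phiH_hinf _
  exact congrArg Matrix.det h

lemma psiH_schur (r : ℕ) (lam : Fin r → ℕ) :
    psiH (schurInf r lam) =
      Matrix.det (fun i j : Fin r => sbmHinf ((lam j : ℤ) - (j : ℤ) + (i : ℤ))) := by
  rw [schurInf]
  refine (RingHom.map_det psiH _).trans ?_
  refine (congrArg Matrix.det (RingHom.mapMatrix_apply psiH _)).trans ?_
  have h : (Matrix.map (fun i j : Fin r => hinf ((lam j : ℤ) - (j : ℤ) + (i : ℤ))) psiH) =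
      (fun i j : Fin r => sbmHinf ((lam j : ℤ) - (j : ℤ) + (i : ℤ))) := by
    funext i j
    exact psiH_hinf _
  exact congrArg Matrix.det h

lemma S_eq_phiH (S : Binf →ₗ[ℤ] Polynomial Binf)
    (hS : ∀ (r : ℕ) (lam : Fin r → ℕ), Antitone lam →
      S (schurInf r lam) =
        Matrix.det (fun i j : Fin r => smHinf ((lam j : ℤ) - (j : ℤ) + (i : ℤ)))) :
    ∀ p : Binf, S p = phiH p := by
  intro p
  refine Submodule.span_induction (p := fun x _ => S x = phiH x) ?_ ?_ ?_ ?_ (mem_Msub p)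
  · rintro x ⟨r, lam, hA, rfl⟩
    rw [hS r lam hA, phiH_schur]
  · show S 0 = phiH 0
    rw [map_zero, map_zero]
  · intro x y _ _ ihx ihy
    show S (x + y) = phiH (x + y)
    rw [map_add, ihx, ihy, map_add]
  · intro a x _ ihx
    show S (a • x) = phiH (a • x)
    rw [map_smul, ihx, ← map_zsmul phiH a x]

lemma Sb_eq_psiH (Sb : Binf →ₗ[ℤ] Polynomial Binf)
    (hSb : ∀ (r : ℕ) (lam : Fin r → ℕ), Antitone lam →
      Sb (schurInf r lam) =
        Matrix.det (fun i j : Fin r => sbmHinf ((lam j : ℤ) - (j : ℤ) + (i : ℤ)))) :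
    ∀ p : Binf, Sb p = psiH p := by
  intro p
  refine Submodule.span_induction (p := fun x _ => Sb x = psiH x) ?_ ?_ ?_ ?_ (mem_Msub p)
  · rintro x ⟨r, lam, hA, rfl⟩
    rw [hSb r lam hA, psiH_schur]
  · show Sb 0 = psiH 0
    rw [map_zero, map_zero]
  · intro x y _ _ ihx ihy
    show Sb (x + y) = psiH (x + y)
    rw [map_add, ihx, ihy, map_add]
  · intro a x _ ihx
    show Sb (a • x) = psiH (a • x)
    rw [map_smul, ihx, ← map_zsmul psiH a x]

end SigmaAux10


/--
the maps `σ₋(z), σ̄₋(z) : B_∞ → B_∞[z^{-1}]` — the `ℤ`-linear maps defined on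
the basis of Schur determinants by `σ₋(z)Δ_λ(H_∞) = det(σ₋(z)h_{λ_j-j+i})` and
`σ̄₋(z)Δ_λ(H_∞) = det(σ̄₋(z)h_{λ_j-j+i})`, with `σ₋(z)h_n = Σ_{j=0}^n h_{n-j}z^{-j}` and
`σ̄₋(z)h_n = h_n - h_{n-1}z^{-1}` — are ring homomorphisms, and they are mutually inverse
when regarded as elements of `End_ℤ(B_∞)[[z^{-1}]]` (i.e. their coefficient families are
Cauchy-convolution inverses).  In particular they are multiplicative on products of `h`'s.
-/

theorem sigmaMinus_ring_homs_and_inverse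
    (S Sb : Binf →ₗ[ℤ] Polynomial Binf)
    (hS : ∀ (r : ℕ) (lam : Fin r → ℕ), Antitone lam →
      S (schurInf r lam) =
        Matrix.det (fun i j : Fin r => smHinf ((lam j : ℤ) - (j : ℤ) + (i : ℤ))))
    (hSb : ∀ (r : ℕ) (lam : Fin r → ℕ), Antitone lam →
      Sb (schurInf r lam) =
        Matrix.det (fun i j : Fin r => sbmHinf ((lam j : ℤ) - (j : ℤ) + (i : ℤ)))) :
    (∀ p q : Binf, S (p * q) = S p * S q) ∧ S 1 = 1 ∧
    (∀ p q : Binf, Sb (p * q) = Sb p * Sb q) ∧ Sb 1 = 1 ∧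
    (∀ (n : ℕ) (p : Binf),
      (∑ ij ∈ Finset.HasAntidiagonal.antidiagonal n, (S ((Sb p).coeff ij.2)).coeff ij.1) =
        if n = 0 then p else 0) ∧
    (∀ (n : ℕ) (p : Binf),
      (∑ ij ∈ Finset.HasAntidiagonal.antidiagonal n, (Sb ((S p).coeff ij.2)).coeff ij.1) =
        if n = 0 then p else 0) ∧
    (∀ (s : ℕ) (idx : Fin s → ℕ),
      S (∏ t : Fin s, hinf (idx t)) = ∏ t : Fin s, S (hinf (idx t))) ∧
    (∀ (s : ℕ) (idx : Fin s → ℕ),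
      Sb (∏ t : Fin s, hinf (idx t)) = ∏ t : Fin s, Sb (hinf (idx t))) := by
  have hSp : ∀ p, S p = phiH p := S_eq_phiH S hS
  have hSbp : ∀ p, Sb p = psiH p := Sb_eq_psiH Sb hSb
  refine ⟨?_, ?_, ?_, ?_, ?_, ?_, ?_, ?_⟩
  · intro p q
    rw [hSp, hSp, hSp, map_mul]
  · rw [hSp, map_one]
  · intro p q
    rw [hSbp, hSbp, hSbp, map_mul]
  · rw [hSbp, map_one]
  · intro n p
    have h : ∀ ij : ℕ × ℕ, (S ((Sb p).coeff ij.2)).coeff ij.1 =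
        (phiH ((psiH p).coeff ij.2)).coeff ij.1 := by
      intro ij
      rw [hSp, hSbp]
    rw [Finset.sum_congr rfl fun ij _ => h ij]
    exact conv_phi_psi n p
  · intro n p
    have h : ∀ ij : ℕ × ℕ, (Sb ((S p).coeff ij.2)).coeff ij.1 =
        (psiH ((phiH p).coeff ij.2)).coeff ij.1 := by
      intro ij
      rw [hSp, hSbp]
    rw [Finset.sum_congr rfl fun ij _ => h ij]
    exact conv_psi_phi n p
  · intro s idx
    rw [hSp, map_prod]
    exact Finset.prod_congr rfl fun t _ => (hSp _).symm
  · intro s idx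
    rw [hSbp, map_prod]
    exact Finset.prod_congr rfl fun t _ => (hSbp _).symm
end

section
/- Bosonic expression of the vertex operators: let B = ℚ[x_1,x_2,…] with Σ_{n≥0} h_n z^n = exp(Σ_{i≥1} x_i z^i). Then, as operators B → B[[z^{−1}]], σ̄₋(z) = exp(−Σ_{i≥1} (1/(i z^i)) ∂/∂x_i) and σ₋(z) = exp(Σ_{i≥1} (1/(i z^i)) ∂/∂x_i). Consequently the operators Γ(z), Γ*(z): B → B((z)) defined by Γ(z)p := (1/E_∞(z))·σ̄₋(z)p and Γ*(z)p := E_∞(z)·σ₋(z)p satisfy Γ(z) = exp(Σ_{i≥1} x_i z^i) exp(−Σ_{i≥1} (1/(i z^i)) ∂/∂x_i) and Γ*(z) = exp(−Σ_{i≥1} x_i z^i) exp(Σ_{i≥1} (1/(i z^i)) ∂/∂x_i). -/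
/-- `B = ℚ[x₁,x₂,…]`, the polynomial ring in countably many variables over `ℚ`
(`X i` is `x_{i+1}`). -/
abbrev Bq : Type := MvPolynomial ℕ ℚ

/-- The elements `h_n ∈ B` defined by `Σ_{n≥0} h_n z^n = exp(Σ_{i≥1} x_i z^i)`,
characterized (in characteristic zero) by `h₀ = 1` together with the differential
recursion `(n+1)·h_{n+1} = Σ_{i=1}^{n+1} i·x_i·h_{n+1-i}` obtained by differentiating
the defining equation in `z`. -/
noncomputable def hq : ℕ → Bq
  | 0 => 1
  | (n + 1) =>
      (((n : ℚ) + 1)⁻¹) •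
        ∑ i ∈ (Finset.range (n + 1)).attach,
          ((i.1 : ℚ) + 1) • (MvPolynomial.X i.1 * hq (n - i.1))
  decreasing_by exact Nat.lt_succ_of_le (Nat.sub_le n i.1)

/-- `h_n` for `n : ℤ`, with `h_n = 0` for `n < 0`. -/
noncomputable def hqz (n : ℤ) : Bq := if 0 ≤ n then hq n.toNat else 0

/-- The coefficients `g_m` of `E_∞(z) = exp(-Σ_{i≥1} x_i z^i) = 1/(Σ_n h_n z^n)`,
defined by the convolution recursion `g₀ = 1`, `Σ_{i=0}^n g_i h_{n-i} = 0` for `n ≥ 1`. -/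
noncomputable def gq : ℕ → Bq
  | 0 => 1
  | (n + 1) => -∑ i ∈ (Finset.range (n + 1)).attach, gq i.1 * hq (n + 1 - i.1)
  decreasing_by exact Finset.mem_range.mp i.2

/-- The partial derivative `∂/∂x_{i+1}` as an endomorphism of `B`. -/
noncomputable def pd (i : ℕ) : Module.End ℚ Bq := (MvPolynomial.pderiv i).toLinearMap

/-- The exponential of a formal power series of operators with zero constant term:
`exp(D)ₖ = Σ_{m≤k} (1/m!) (Dᵐ)ₖ` (the truncation is exact when the constant term of `D`
vanishes, since then `coeff k (Dᵐ) = 0` for `m > k`). -/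
noncomputable def expOp (D : PowerSeries (Module.End ℚ Bq)) :
    PowerSeries (Module.End ℚ Bq) :=
  PowerSeries.mk fun k =>
    ∑ m ∈ Finset.range (k + 1), ((m.factorial : ℚ)⁻¹) • PowerSeries.coeff k (D ^ m)

/-- The operator series `Σ_{i≥1} (1/i) ∂/∂x_i uⁱ` in the variable `u = z⁻¹`. -/
noncomputable def Dxq : PowerSeries (Module.End ℚ Bq) :=
  PowerSeries.mk fun k => if k = 0 then 0 else ((k : ℚ)⁻¹) • pd (k - 1)

lemma smul_cancel {c : ℚ} (hc : c ≠ 0) {a b : Bq} (h : c • a = c • b) : a = b := by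
  have h2 := congrArg (fun x => c⁻¹ • x) h
  simpa [smul_smul, inv_mul_cancel₀ hc] using h2

lemma hq_succ_smul (n : ℕ) : ((n:ℚ)+1) • hq (n+1) =
    ∑ i ∈ Finset.range (n+1), ((i:ℚ)+1) • (MvPolynomial.X i * hq (n - i)) := by
  rw [hq, smul_smul, mul_inv_cancel₀ (by positivity), one_smul,
    Finset.sum_attach (Finset.range (n+1)) (fun i => ((i:ℚ)+1) • (MvPolynomial.X i * hq (n - i)))]

lemma pderiv_hq : ∀ n j, (MvPolynomial.pderiv j) (hq n)
    = if j + 1 ≤ n then hq (n - (j+1)) else 0 := by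
  intro n
  induction n using Nat.strong_induction_on with
  | _ n IH =>
    match n with
    | 0 => intro j; simp [hq]
    | (n+1) =>
      intro j
      have key := congrArg (MvPolynomial.pderiv j) (hq_succ_smul n)
      rw [Derivation.map_smul, map_sum] at key
      have key2 : ((n:ℚ)+1) • (MvPolynomial.pderiv j) (hq (n+1)) =
          ∑ i ∈ Finset.range (n+1), ((i:ℚ)+1) •
            ((if i = j then hq (n-i) else 0) + MvPolynomial.X i *
              (if j + 1 ≤ n - i then hq (n - i - (j+1)) else 0)) := by
        rw [key]
        refine Finset.sum_congr rfl fun i hi => ?_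
        rw [Derivation.map_smul]
        congr 1
        rw [MvPolynomial.pderiv_mul, IH (n-i) (by omega) j]
        congr 1
        rw [MvPolynomial.pderiv_X, Pi.single_apply]
        by_cases h : i = j <;> simp [h]
      by_cases hjn : j + 1 ≤ n + 1
      · -- j ≤ n
        have split : ∑ i ∈ Finset.range (n+1), ((i:ℚ)+1) •
            ((if i = j then hq (n-i) else 0) + MvPolynomial.X i *
              (if j + 1 ≤ n - i then hq (n - i - (j+1)) else 0))
            = ((j:ℚ)+1) • hq (n-j) + ∑ i ∈ Finset.range (n+1), ((i:ℚ)+1) •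
              (MvPolynomial.X i * (if j + 1 ≤ n - i then hq (n - i - (j+1)) else 0)) := by
          simp only [smul_add]
          rw [Finset.sum_add_distrib]
          congr 1
          rw [Finset.sum_eq_single j]
          · simp
          · intro b _ hbj; simp [hbj]
          · intro h; exact absurd (Finset.mem_range.mpr (by omega)) h
        rw [split] at key2
        by_cases hjn' : j = n
        · have hz : ∑ i ∈ Finset.range (n+1), ((i:ℚ)+1) •
              (MvPolynomial.X i * (if j + 1 ≤ n - i then hq (n - i - (j+1)) else 0)) = 0 := by
            apply Finset.sum_eq_zero; intro i hi
            have hi' := Finset.mem_range.mp hi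
            have : ¬ (j + 1 ≤ n - i) := by omega
            simp [this]
          rw [hz, add_zero] at key2
          have hjq : ((j:ℚ)+1) = ((n:ℚ)+1) := by simp [hjn']
          rw [hjq] at key2
          have hcast : ((n:ℚ)+1) ≠ 0 := by positivity
          have h0 := smul_cancel hcast key2
          rw [if_pos hjn, show n+1-(j+1) = n - j from by omega]
          exact h0
          -- end
        · -- j < n
          have hjlt : j < n := by omega
          set m := n - (j+1) with hm
          have sum_eq : ∑ i ∈ Finset.range (n+1), ((i:ℚ)+1) •
              (MvPolynomial.X i * (if j + 1 ≤ n - i then hq (n - i - (j+1)) else 0))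
              = ∑ i ∈ Finset.range (m+1), ((i:ℚ)+1) • (MvPolynomial.X i * hq (m - i)) := by
            rw [← Finset.sum_subset (Finset.range_subset_range.mpr (by omega : m+1 ≤ n+1))]
            · refine Finset.sum_congr rfl fun i hi => ?_
              have hi' : i < m + 1 := Finset.mem_range.mp hi
              have h1 : j + 1 ≤ n - i := by omega
              have h2 : n - i - (j+1) = m - i := by omega
              rw [if_pos h1, h2]
            · intro i hi hni
              have hi' : i < n + 1 := Finset.mem_range.mp hi
              have hni' : ¬ (i < m + 1) := fun h => hni (Finset.mem_range.mpr h)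
              have : ¬ (j + 1 ≤ n - i) := by omega
              simp [this]
          rw [sum_eq, ← hq_succ_smul m] at key2
          have hmn : m + 1 = n - j := by omega
          rw [hmn] at key2
          have hcst : ((m:ℚ)) + ((j:ℚ)+1) = (n:ℚ) := by
            have hnm : m + (j+1) = n := by omega
            exact_mod_cast congrArg (Nat.cast : ℕ → ℚ) hnm
          have combine : ((j:ℚ)+1) • hq (n-j) + ((m:ℚ)+1) • hq (n - j)
              = ((n:ℚ)+1) • hq (n-j) := by
            rw [← add_smul]; congr 1; linarith
          rw [combine] at key2
          have hcast : ((n:ℚ)+1) ≠ 0 := by positivity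
          have h0 := smul_cancel hcast key2
          rw [if_pos hjn, show n+1-(j+1) = n - j from by omega]
          exact h0
      · -- j > n
        have zero1 : ∑ i ∈ Finset.range (n+1), ((i:ℚ)+1) •
            ((if i = j then hq (n-i) else 0) + MvPolynomial.X i *
              (if j + 1 ≤ n - i then hq (n - i - (j+1)) else 0)) = 0 := by
          apply Finset.sum_eq_zero; intro i hi
          have hi' := Finset.mem_range.mp hi
          have h1 : i ≠ j := by omega
          have h2 : ¬ (j + 1 ≤ n - i) := by omega
          simp [h1, h2]
        rw [zero1] at key2
        have hcast : ((n:ℚ)+1) ≠ 0 := by positivity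
        have h0 := smul_cancel hcast (key2.trans (smul_zero _).symm)
        rw [if_neg hjn]
        exact h0

lemma hqz_ofNat (n : ℕ) : hqz (n : ℤ) = hq n := by simp [hqz]

lemma hqz_neg {t : ℤ} (h : t < 0) : hqz t = 0 := by
  rw [hqz, if_neg (by omega)]

lemma pd_hqz (j : ℕ) (t : ℤ) : pd j (hqz t) = hqz (t - (j+1)) := by
  by_cases ht : 0 ≤ t
  · rw [hqz, if_pos ht]
    have hpd : pd j (hq t.toNat) = (MvPolynomial.pderiv j) (hq t.toNat) := rfl
    rw [hpd, pderiv_hq]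
    by_cases h : j + 1 ≤ t.toNat
    · rw [if_pos h, hqz, if_pos (by omega)]
      congr 1
      omega
    · rw [if_neg h, hqz, if_neg (by omega)]
  · rw [hqz_neg (by omega), hqz_neg (by omega), map_zero]

lemma coeff_pow_eq_zero {R : Type*} [Semiring R] {φ : PowerSeries R}
    (h : PowerSeries.constantCoeff φ = 0) :
    ∀ m k, k < m → PowerSeries.coeff k (φ^m) = 0 := by
  intro m
  induction m with
  | zero => intro k hk; omega
  | succ m IH =>
    intro k hk
    rw [pow_succ, PowerSeries.coeff_mul]
    apply Finset.sum_eq_zero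
    intro x hx
    have hx' := Finset.HasAntidiagonal.mem_antidiagonal.mp hx
    by_cases h1 : x.1 < m
    · rw [IH x.1 h1, zero_mul]
    · have : x.2 = 0 := by omega
      rw [this, PowerSeries.coeff_zero_eq_constantCoeff, h, mul_zero]

lemma coeff_pow_hqz {D : PowerSeries (Module.End ℚ Bq)} {G : PowerSeries ℚ}
    (hDG : ∀ (j : ℕ) (t : ℤ), (PowerSeries.coeff j D) (hqz t)
      = (PowerSeries.coeff j G) • hqz (t - j)) :
    ∀ m k (t : ℤ), (PowerSeries.coeff k (D^m)) (hqz t)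
      = (PowerSeries.coeff k (G^m)) • hqz (t - k) := by
  intro m
  induction m with
  | zero =>
    intro k t
    simp only [pow_zero, PowerSeries.coeff_one]
    by_cases hk : k = 0 <;> simp [hk]
  | succ m IH =>
    intro k t
    rw [pow_succ', pow_succ', PowerSeries.coeff_mul, PowerSeries.coeff_mul,
      LinearMap.coe_sum, Finset.sum_apply]
    rw [Finset.sum_smul]
    refine Finset.sum_congr rfl fun x hx => ?_
    have hx' := Finset.HasAntidiagonal.mem_antidiagonal.mp hx
    have harg : t - (x.2:ℤ) - (x.1:ℤ) = t - (k:ℤ) := by omega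
    rw [Module.End.mul_apply, IH x.2 t, LinearMap.map_smul, hDG x.1 (t - x.2), smul_smul,
      harg, mul_comm]

noncomputable def Gs (s : ℚ) : PowerSeries ℚ :=
  PowerSeries.mk fun k => if k = 0 then 0 else s * (k:ℚ)⁻¹

noncomputable def eC (s : ℚ) (k : ℕ) : ℚ :=
  ∑ m ∈ Finset.range (k+1), ((m.factorial : ℚ))⁻¹ * PowerSeries.coeff k ((Gs s)^m)

lemma constantCoeff_Gs (s : ℚ) : PowerSeries.constantCoeff (Gs s) = 0 := by
  rw [← PowerSeries.coeff_zero_eq_constantCoeff, Gs, PowerSeries.coeff_mk, if_pos rfl]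

lemma derivative_Gs (s : ℚ) : PowerSeries.derivative ℚ (Gs s) = PowerSeries.mk fun _ => s := by
  ext k
  rw [PowerSeries.coeff_derivative, Gs, PowerSeries.coeff_mk, PowerSeries.coeff_mk,
    if_neg (Nat.succ_ne_zero k)]
  push_cast
  field_simp

lemma eC_zero (s : ℚ) : eC s 0 = 1 := by
  simp [eC]

lemma eC_rec (s : ℚ) (k : ℕ) :
    ((k:ℚ)+1) * eC s (k+1) = s * ∑ i ∈ Finset.range (k+1), eC s i := by
  have A : ∀ m : ℕ, ((k:ℚ)+1) * ((((m+1).factorial : ℚ))⁻¹ * PowerSeries.coeff (k+1) ((Gs s)^(m+1)))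
      = ((m.factorial : ℚ))⁻¹ * PowerSeries.coeff k ((Gs s)^m * PowerSeries.derivative ℚ (Gs s)) := by
    intro m
    have h1 : PowerSeries.coeff k (PowerSeries.derivative ℚ ((Gs s)^(m+1)))
        = PowerSeries.coeff (k+1) ((Gs s)^(m+1)) * ((k:ℚ)+1) := by
      rw [PowerSeries.coeff_derivative]
    have h2 : PowerSeries.derivative ℚ ((Gs s)^(m+1))
        = (m+1) • ((Gs s)^m * (PowerSeries.derivative ℚ) (Gs s)) := by
      rw [Derivation.leibniz_pow, Nat.add_sub_cancel, smul_eq_mul]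
    have h3 : PowerSeries.coeff k (PowerSeries.derivative ℚ ((Gs s)^(m+1)))
        = ((m:ℚ)+1) * PowerSeries.coeff k ((Gs s)^m * PowerSeries.derivative ℚ (Gs s)) := by
      rw [h2, map_nsmul, nsmul_eq_mul]
      push_cast
      ring
    have hfac : (((m+1).factorial : ℚ)) = ((m:ℚ)+1) * (m.factorial : ℚ) := by
      rw [Nat.factorial_succ]; push_cast; ring
    have hm1 : ((m:ℚ)+1) ≠ 0 := by positivity
    have hmf : ((m.factorial : ℚ)) ≠ 0 := by
      exact_mod_cast Nat.factorial_ne_zero m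
    calc ((k:ℚ)+1) * ((((m+1).factorial : ℚ))⁻¹ * PowerSeries.coeff (k+1) ((Gs s)^(m+1)))
        = (((m+1).factorial : ℚ))⁻¹ * (PowerSeries.coeff (k+1) ((Gs s)^(m+1)) * ((k:ℚ)+1)) := by
          ring
      _ = (((m+1).factorial : ℚ))⁻¹ * PowerSeries.coeff k (PowerSeries.derivative ℚ ((Gs s)^(m+1))) := by
          rw [h1]
      _ = (((m+1).factorial : ℚ))⁻¹ * (((m:ℚ)+1) * PowerSeries.coeff k ((Gs s)^m * PowerSeries.derivative ℚ (Gs s))) := by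
          rw [h3]
      _ = ((m.factorial : ℚ))⁻¹ * PowerSeries.coeff k ((Gs s)^m * PowerSeries.derivative ℚ (Gs s)) := by
          rw [hfac, mul_inv]
          field_simp
  have B : ∀ m, PowerSeries.coeff k ((Gs s)^m * PowerSeries.derivative ℚ (Gs s))
      = ∑ x ∈ Finset.HasAntidiagonal.antidiagonal k, PowerSeries.coeff x.1 ((Gs s)^m) * s := by
    intro m
    rw [derivative_Gs, PowerSeries.coeff_mul]
    exact Finset.sum_congr rfl fun x _ => by rw [PowerSeries.coeff_mk]
  have C : ∀ i, i ≤ k →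
      (∑ m ∈ Finset.range (k+1), ((m.factorial:ℚ))⁻¹ * (PowerSeries.coeff i ((Gs s)^m) * s))
        = eC s i * s := by
    intro i hi
    rw [eC, Finset.sum_mul]
    rw [← Finset.sum_subset (Finset.range_subset_range.mpr (by omega : i + 1 ≤ k + 1))]
    · exact Finset.sum_congr rfl fun m _ => by ring
    · intro m hm hmi
      rw [coeff_pow_eq_zero (constantCoeff_Gs s) m i (by
        have h1 := Finset.mem_range.mp hm
        have h2 : ¬ (m < i+1) := fun h => hmi (Finset.mem_range.mpr h)
        omega)]
      ring
  calc ((k:ℚ)+1) * eC s (k+1)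
      = ∑ m ∈ Finset.range (k+2), ((k:ℚ)+1) * (((m.factorial:ℚ))⁻¹ * PowerSeries.coeff (k+1) ((Gs s)^m)) := by
        rw [eC, Finset.mul_sum]
    _ = (∑ m ∈ Finset.range (k+1), ((k:ℚ)+1) * ((((m+1).factorial:ℚ))⁻¹ * PowerSeries.coeff (k+1) ((Gs s)^(m+1))))
        + ((k:ℚ)+1) * ((((0:ℕ).factorial:ℚ))⁻¹ * PowerSeries.coeff (k+1) ((Gs s)^0)) :=
        Finset.sum_range_succ' _ (k+1)
    _ = ∑ m ∈ Finset.range (k+1), ∑ x ∈ Finset.HasAntidiagonal.antidiagonal k, ((m.factorial:ℚ))⁻¹ * (PowerSeries.coeff x.1 ((Gs s)^m) * s) := by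
        rw [pow_zero, PowerSeries.coeff_one, if_neg (Nat.succ_ne_zero k), mul_zero, mul_zero, add_zero]
        refine Finset.sum_congr rfl fun m _ => ?_
        rw [A m, B m, Finset.mul_sum]
    _ = ∑ x ∈ Finset.HasAntidiagonal.antidiagonal k, ∑ m ∈ Finset.range (k+1), ((m.factorial:ℚ))⁻¹ * (PowerSeries.coeff x.1 ((Gs s)^m) * s) :=
        Finset.sum_comm
    _ = ∑ x ∈ Finset.HasAntidiagonal.antidiagonal k, eC s x.1 * s :=
        Finset.sum_congr rfl fun x hx => C x.1 (by
          have := Finset.HasAntidiagonal.mem_antidiagonal.mp hx; omega)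
    _ = ∑ i ∈ Finset.range (k+1), eC s i * s := by
        rw [Finset.Nat.sum_antidiagonal_eq_sum_range_succ_mk]
    _ = s * ∑ i ∈ Finset.range (k+1), eC s i := by
        rw [Finset.mul_sum]
        exact Finset.sum_congr rfl fun i _ => mul_comm _ _

lemma eC_one : ∀ k, eC 1 k = 1 := by
  intro k
  induction k using Nat.strong_induction_on with
  | _ k IH =>
    match k with
    | 0 => exact eC_zero 1
    | (k+1) =>
      have hs : ∑ i ∈ Finset.range (k+1), eC 1 i = (k:ℚ)+1 := by
        rw [Finset.sum_congr rfl (fun i hi => IH i (Finset.mem_range.mp hi))]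
        rw [Finset.sum_const, Finset.card_range, nsmul_eq_mul, mul_one]
        push_cast; ring
      have h := eC_rec 1 k
      rw [hs, one_mul] at h
      have hne : ((k:ℚ)+1) ≠ 0 := by positivity
      have := mul_left_cancel₀ hne (h.trans (mul_one _).symm)
      exact this

lemma eC_neg_aux : ∀ k, (∑ i ∈ Finset.range (k+1), eC (-1) i) = if k = 0 then 1 else 0 := by
  intro k
  induction k with
  | zero => simp [eC_zero]
  | succ k IH =>
    have h := eC_rec (-1) k
    rw [IH] at h
    have hne : ((k:ℚ)+1) ≠ 0 := by positivity
    rw [Finset.sum_range_succ, IH]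
    have he : eC (-1) (k+1) = ((k:ℚ)+1)⁻¹ * (-1 * (if k = 0 then 1 else 0)) := by
      rw [← h, ← mul_assoc, inv_mul_cancel₀ hne, one_mul]
    by_cases hk : k = 0
    · subst hk; rw [he]; norm_num
    · rw [he, if_neg hk, if_neg (Nat.succ_ne_zero k)]
      ring

lemma eC_neg : ∀ k, eC (-1) k = if k = 0 then 1 else if k = 1 then -1 else 0 := by
  intro k
  match k with
  | 0 => rw [if_pos rfl]; exact eC_zero (-1)
  | (k+1) =>
    have h := eC_rec (-1) k
    rw [eC_neg_aux k] at h
    have hne : ((k:ℚ)+1) ≠ 0 := by positivity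
    have he : eC (-1) (k+1) = ((k:ℚ)+1)⁻¹ * (-1 * (if k = 0 then 1 else 0)) := by
      rw [← h, ← mul_assoc, inv_mul_cancel₀ hne, one_mul]
    by_cases hk : k = 0
    · subst hk; rw [he]; norm_num
    · rw [he, if_neg hk, if_neg (Nat.succ_ne_zero k), if_neg (by omega : ¬ k + 1 = 1)]
      ring

lemma coeff_Dxq_hqz : ∀ (j : ℕ) (t : ℤ), (PowerSeries.coeff j Dxq) (hqz t)
    = (PowerSeries.coeff j (Gs 1)) • hqz (t - j) := by
  intro j t
  rw [Dxq, PowerSeries.coeff_mk, Gs, PowerSeries.coeff_mk]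
  by_cases hj : j = 0
  · subst hj; simp
  · rw [if_neg hj, if_neg hj, one_mul, LinearMap.smul_apply, pd_hqz]
    congr 2
    omega

lemma coeff_negDxq_hqz : ∀ (j : ℕ) (t : ℤ), (PowerSeries.coeff j (-Dxq)) (hqz t)
    = (PowerSeries.coeff j (Gs (-1))) • hqz (t - j) := by
  intro j t
  rw [map_neg, LinearMap.neg_apply, coeff_Dxq_hqz, ← neg_smul]
  congr 1
  rw [Gs, Gs, PowerSeries.coeff_mk, PowerSeries.coeff_mk]
  by_cases hj : j = 0 <;> simp [hj]

lemma coeff_expOp_hqz {D : PowerSeries (Module.End ℚ Bq)} {s : ℚ}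
    (hDG : ∀ (j : ℕ) (t : ℤ), (PowerSeries.coeff j D) (hqz t)
      = (PowerSeries.coeff j (Gs s)) • hqz (t - j)) (k : ℕ) (t : ℤ) :
    (PowerSeries.coeff k (expOp D)) (hqz t) = eC s k • hqz (t - k) := by
  rw [expOp, PowerSeries.coeff_mk, LinearMap.coe_sum, Finset.sum_apply, eC, Finset.sum_smul]
  refine Finset.sum_congr rfl fun m _ => ?_
  rw [LinearMap.smul_apply, coeff_pow_hqz hDG m k t, smul_smul]

lemma adad {M : Type*} [AddCommMonoid M] (k : ℕ) (T : ℕ → ℕ → ℕ → M) :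
    (∑ x ∈ Finset.HasAntidiagonal.antidiagonal k, ∑ y ∈ Finset.HasAntidiagonal.antidiagonal x.2, T x.1 y.1 y.2)
      = ∑ i ∈ Finset.range (k+1), ∑ a ∈ Finset.range (k+1-i), T i a (k-i-a) := by
  rw [Finset.Nat.sum_antidiagonal_eq_sum_range_succ_mk]
  refine Finset.sum_congr rfl fun i hi => ?_
  rw [Finset.Nat.sum_antidiagonal_eq_sum_range_succ_mk,
    show k + 1 - i = (k - i) + 1 from by have := Finset.mem_range.mp hi; omega]

lemma swapA {M : Type*} [AddCommMonoid M] (k : ℕ) (T : ℕ → ℕ → ℕ → M) :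
    (∑ x ∈ Finset.HasAntidiagonal.antidiagonal k, ∑ y ∈ Finset.HasAntidiagonal.antidiagonal x.2, T x.1 y.1 y.2)
      = ∑ x ∈ Finset.HasAntidiagonal.antidiagonal k, ∑ y ∈ Finset.HasAntidiagonal.antidiagonal x.2, T y.1 x.1 y.2 := by
  rw [adad k T, adad k (fun a i b => T i a b)]
  trans (∑ a ∈ Finset.range (k+1), ∑ i ∈ Finset.range (k+1-a), T i a (k-i-a))
  · exact Finset.sum_comm' (fun i a => by simp only [Finset.mem_range]; omega)
  · exact Finset.sum_congr rfl fun a _ => Finset.sum_congr rfl fun i _ => by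
      rw [show k - i - a = k - a - i from by omega]

lemma swapB {M : Type*} [AddCommMonoid M] (k : ℕ) (T : ℕ → ℕ → ℕ → M) :
    (∑ x ∈ Finset.HasAntidiagonal.antidiagonal k, ∑ y ∈ Finset.HasAntidiagonal.antidiagonal x.2, T x.1 y.1 y.2)
      = ∑ x ∈ Finset.HasAntidiagonal.antidiagonal k, ∑ y ∈ Finset.HasAntidiagonal.antidiagonal x.2, T x.1 y.2 y.1 :=
  Finset.sum_congr rfl fun x _ =>
    (Finset.Nat.sum_antidiagonal_swap (f := fun y => T x.1 y.1 y.2)).symm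

lemma swapO {M : Type*} [AddCommMonoid M] (k : ℕ) (T : ℕ → ℕ → ℕ → M) :
    (∑ x ∈ Finset.HasAntidiagonal.antidiagonal k, ∑ y ∈ Finset.HasAntidiagonal.antidiagonal x.2, T x.1 y.1 y.2)
      = ∑ x ∈ Finset.HasAntidiagonal.antidiagonal k, ∑ y ∈ Finset.HasAntidiagonal.antidiagonal x.1, T x.2 y.1 y.2 := by
  have h := Finset.Nat.sum_antidiagonal_swap (n := k)
    (f := fun x => ∑ y ∈ Finset.HasAntidiagonal.antidiagonal x.1, T x.2 y.1 y.2)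
  simp only [Prod.fst_swap, Prod.snd_swap] at h
  exact h

noncomputable def actD (D : PowerSeries (Module.End ℚ Bq)) :
    PowerSeries Bq →ₗ[ℚ] PowerSeries Bq where
  toFun f := PowerSeries.mk fun k => ∑ y ∈ Finset.HasAntidiagonal.antidiagonal k,
      (PowerSeries.coeff y.1 D) (PowerSeries.coeff y.2 f)
  map_add' f g := by
    refine PowerSeries.ext fun k => ?_
    rw [map_add, PowerSeries.coeff_mk, PowerSeries.coeff_mk, PowerSeries.coeff_mk,
      ← Finset.sum_add_distrib]
    exact Finset.sum_congr rfl fun y _ => by rw [map_add, map_add]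
  map_smul' c f := by
    refine PowerSeries.ext fun k => ?_
    rw [RingHom.id_apply, PowerSeries.coeff_smul, PowerSeries.coeff_mk, PowerSeries.coeff_mk,
      Finset.smul_sum]
    exact Finset.sum_congr rfl fun y _ => by rw [PowerSeries.coeff_smul, map_smul]

lemma coeff_actD (D : PowerSeries (Module.End ℚ Bq)) (f : PowerSeries Bq) (k : ℕ) :
    PowerSeries.coeff k (actD D f) = ∑ y ∈ Finset.HasAntidiagonal.antidiagonal k,
      (PowerSeries.coeff y.1 D) (PowerSeries.coeff y.2 f) := by
  simp only [actD, LinearMap.coe_mk, AddHom.coe_mk, PowerSeries.coeff_mk]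

lemma actD_pow_C (D : PowerSeries (Module.End ℚ Bq)) : ∀ (m : ℕ) (p : Bq) (k : ℕ),
    PowerSeries.coeff k ((actD D ^ m) (PowerSeries.C p))
      = (PowerSeries.coeff k (D ^ m)) p := by
  intro m
  induction m with
  | zero =>
    intro p k
    rw [pow_zero, pow_zero, Module.End.one_apply, PowerSeries.coeff_C, PowerSeries.coeff_one]
    by_cases hk : k = 0 <;> simp [hk]
  | succ m IH =>
    intro p k
    rw [pow_succ', pow_succ', Module.End.mul_apply, coeff_actD, PowerSeries.coeff_mul,
      LinearMap.coe_sum, Finset.sum_apply]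
    exact Finset.sum_congr rfl fun y _ => by rw [IH p y.2, Module.End.mul_apply]

lemma actD_mul {D : PowerSeries (Module.End ℚ Bq)}
    (hder : ∀ (j : ℕ) (p q : Bq), (PowerSeries.coeff j D) (p*q)
      = p * (PowerSeries.coeff j D) q
        + ((PowerSeries.coeff j D) p) * q)
    (f g : PowerSeries Bq) : actD D (f * g) = f * actD D g + actD D f * g := by
  refine PowerSeries.ext fun k => ?_
  rw [map_add, coeff_actD]
  have expand : ∑ x ∈ Finset.HasAntidiagonal.antidiagonal k,
      (PowerSeries.coeff x.1 D) (PowerSeries.coeff x.2 (f * g))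
      = (∑ x ∈ Finset.HasAntidiagonal.antidiagonal k, ∑ y ∈ Finset.HasAntidiagonal.antidiagonal x.2,
          PowerSeries.coeff y.1 f * (PowerSeries.coeff x.1 D) (PowerSeries.coeff y.2 g))
        + ∑ x ∈ Finset.HasAntidiagonal.antidiagonal k, ∑ y ∈ Finset.HasAntidiagonal.antidiagonal x.2,
          (PowerSeries.coeff x.1 D) (PowerSeries.coeff y.1 f) * PowerSeries.coeff y.2 g := by
    rw [← Finset.sum_add_distrib]
    refine Finset.sum_congr rfl fun x _ => ?_
    rw [PowerSeries.coeff_mul, map_sum, ← Finset.sum_add_distrib]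
    exact Finset.sum_congr rfl fun y _ => hder x.1 _ _
  rw [expand]
  congr 1
  · rw [← swapA k (fun x1 y1 y2 => PowerSeries.coeff x1 f
      * (PowerSeries.coeff y1 D) (PowerSeries.coeff y2 g))]
    rw [PowerSeries.coeff_mul]
    refine Finset.sum_congr rfl fun x _ => ?_
    rw [coeff_actD, Finset.mul_sum]
  · rw [swapB k (fun x1 y1 y2 => (PowerSeries.coeff x1 D)
        (PowerSeries.coeff y1 f) * PowerSeries.coeff y2 g),
      ← swapA k (fun x1 y1 y2 => (PowerSeries.coeff y1 D)
        (PowerSeries.coeff y2 f) * PowerSeries.coeff x1 g),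
      swapO k (fun x1 y1 y2 => (PowerSeries.coeff y1 D)
        (PowerSeries.coeff y2 f) * PowerSeries.coeff x1 g)]
    rw [PowerSeries.coeff_mul]
    refine Finset.sum_congr rfl fun x _ => ?_
    rw [coeff_actD, Finset.sum_mul]

lemma actD_pow_mul {D : PowerSeries (Module.End ℚ Bq)}
    (hder : ∀ (j : ℕ) (p q : Bq), (PowerSeries.coeff j D) (p*q)
      = p * (PowerSeries.coeff j D) q
        + ((PowerSeries.coeff j D) p) * q) :
    ∀ (m : ℕ) (f g : PowerSeries Bq),
    (actD D ^ m) (f * g) = ∑ y ∈ Finset.HasAntidiagonal.antidiagonal m,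
      (m.choose y.1) • ((actD D ^ y.1) f * (actD D ^ y.2) g) := by
  intro m
  induction m with
  | zero =>
    intro f g
    rw [pow_zero, Module.End.one_apply, Finset.Nat.antidiagonal_zero, Finset.sum_singleton]
    simp
  | succ m IH =>
    intro f g
    rw [pow_succ', Module.End.mul_apply, IH f g, map_sum]
    have step : ∀ y : ℕ × ℕ, actD D ((m.choose y.1) • ((actD D ^ y.1) f * (actD D ^ y.2) g))
        = (m.choose y.1) • ((actD D ^ y.1) f * (actD D ^ (y.2+1)) g)
          + (m.choose y.1) • ((actD D ^ (y.1+1)) f * (actD D ^ y.2) g) := by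
      intro y
      rw [map_nsmul, actD_mul hder, smul_add]
      congr 2
      · rw [pow_succ', Module.End.mul_apply]
      · rw [pow_succ', Module.End.mul_apply]
    rw [Finset.sum_congr rfl (fun y _ => step y), Finset.sum_add_distrib]
    have part1 : ∑ y ∈ Finset.HasAntidiagonal.antidiagonal m, (m.choose y.1) • ((actD D ^ y.1) f * (actD D ^ (y.2+1)) g)
        = ∑ y ∈ Finset.HasAntidiagonal.antidiagonal (m+1), (m.choose y.1) • ((actD D ^ y.1) f * (actD D ^ y.2) g) := by
      rw [Finset.Nat.sum_antidiagonal_succ'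
        (f := fun y => (m.choose y.1) • ((actD D ^ y.1) f * (actD D ^ y.2) g))]
      rw [Nat.choose_succ_self, zero_smul, zero_add]
    have part1' : ∑ y ∈ Finset.HasAntidiagonal.antidiagonal (m+1), (m.choose y.1) • ((actD D ^ y.1) f * (actD D ^ y.2) g)
        = (1:ℕ) • ((actD D ^ 0) f * (actD D ^ (m+1)) g)
          + ∑ y ∈ Finset.HasAntidiagonal.antidiagonal m, (m.choose (y.1+1)) • ((actD D ^ (y.1+1)) f * (actD D ^ y.2) g) := by
      rw [Finset.Nat.sum_antidiagonal_succ
        (f := fun y => (m.choose y.1) • ((actD D ^ y.1) f * (actD D ^ y.2) g))]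
      rw [Nat.choose_zero_right]
    have target : ∑ y ∈ Finset.HasAntidiagonal.antidiagonal (m+1), ((m+1).choose y.1) • ((actD D ^ y.1) f * (actD D ^ y.2) g)
        = (1:ℕ) • ((actD D ^ 0) f * (actD D ^ (m+1)) g)
          + ∑ y ∈ Finset.HasAntidiagonal.antidiagonal m, (((m.choose y.1) + (m.choose (y.1+1)))) • ((actD D ^ (y.1+1)) f * (actD D ^ y.2) g) := by
      rw [Finset.Nat.sum_antidiagonal_succ
        (f := fun y => ((m+1).choose y.1) • ((actD D ^ y.1) f * (actD D ^ y.2) g))]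
      simp [Nat.choose_succ_succ]
    rw [part1, part1', target]
    simp only [add_smul]
    rw [Finset.sum_add_distrib]
    abel

lemma coeff_actD_pow_C_eq_zero {D : PowerSeries (Module.End ℚ Bq)}
    (h0 : PowerSeries.constantCoeff D = 0) (m k : ℕ) (p : Bq) (h : k < m) :
    PowerSeries.coeff k ((actD D ^ m) (PowerSeries.C p)) = 0 := by
  rw [actD_pow_C, coeff_pow_eq_zero h0 m k h, LinearMap.zero_apply]

lemma coeff_mul_pow_eq_zero {D : PowerSeries (Module.End ℚ Bq)}
    (h0 : PowerSeries.constantCoeff D = 0) {a b k : ℕ} (p q : Bq)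
    (h : k < a + b) :
    PowerSeries.coeff k ((actD D ^ a) (PowerSeries.C p) * (actD D ^ b) (PowerSeries.C q)) = 0 := by
  rw [PowerSeries.coeff_mul]
  apply Finset.sum_eq_zero
  intro y hy
  have hy' := Finset.HasAntidiagonal.mem_antidiagonal.mp hy
  by_cases h1 : y.1 < a
  · rw [coeff_actD_pow_C_eq_zero h0 a y.1 p h1, zero_mul]
  · rw [coeff_actD_pow_C_eq_zero h0 b y.2 q (by omega), mul_zero]

lemma coeff_expOp_apply (D : PowerSeries (Module.End ℚ Bq)) (p : Bq) (k : ℕ) :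
    (PowerSeries.coeff k (expOp D)) p
      = ∑ m ∈ Finset.range (k+1),
          ((m.factorial : ℚ))⁻¹ • (PowerSeries.coeff k (D^m)) p := by
  rw [expOp, PowerSeries.coeff_mk, LinearMap.coe_sum, Finset.sum_apply]
  exact Finset.sum_congr rfl fun m _ => by rw [LinearMap.smul_apply]

lemma coeff_expOp_apply_ext {D : PowerSeries (Module.End ℚ Bq)}
    (h0 : PowerSeries.constantCoeff D = 0) (p : Bq) {k K : ℕ} (hk : k ≤ K) :
    (PowerSeries.coeff k (expOp D)) p
      = ∑ m ∈ Finset.range (K+1),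
          ((m.factorial : ℚ))⁻¹ • (PowerSeries.coeff k (D^m)) p := by
  rw [coeff_expOp_apply]
  apply Finset.sum_subset (Finset.range_subset_range.mpr (by omega))
  intro m hm hmk
  rw [coeff_pow_eq_zero h0 m k (by
    have h1 := Finset.mem_range.mp hm
    have h2 : ¬ (m < k + 1) := fun h => hmk (Finset.mem_range.mpr h)
    omega), LinearMap.zero_apply, smul_zero]

lemma coeff_expOp_mul {D : PowerSeries (Module.End ℚ Bq)}
    (h0 : PowerSeries.constantCoeff D = 0)
    (hder : ∀ (j : ℕ) (p q : Bq), (PowerSeries.coeff j D) (p*q)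
      = p * (PowerSeries.coeff j D) q
        + ((PowerSeries.coeff j D) p) * q)
    (p q : Bq) (k : ℕ) :
    (PowerSeries.coeff k (expOp D)) (p * q)
      = ∑ y ∈ Finset.HasAntidiagonal.antidiagonal k,
          (PowerSeries.coeff y.1 (expOp D)) p
            * (PowerSeries.coeff y.2 (expOp D)) q := by
  classical
  set F : ℕ × ℕ → Bq := fun y => (((y.1.factorial : ℚ))⁻¹ * ((y.2.factorial : ℚ))⁻¹) •
      PowerSeries.coeff k ((actD D ^ y.1) (PowerSeries.C p)
        * (actD D ^ y.2) (PowerSeries.C q)) with hF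
  have scal : ∀ (m : ℕ) (y : ℕ × ℕ), y ∈ Finset.HasAntidiagonal.antidiagonal m → ∀ x : Bq,
      ((m.factorial : ℚ))⁻¹ • ((m.choose y.1) • x)
        = (((y.1.factorial : ℚ))⁻¹ * ((y.2.factorial : ℚ))⁻¹) • x := by
    intro m y hy x
    have hy' := Finset.HasAntidiagonal.mem_antidiagonal.mp hy
    rw [← Nat.cast_smul_eq_nsmul ℚ, smul_smul]
    congr 1
    have hfac : ((y.1+y.2).choose y.1) * y.1.factorial * y.2.factorial = (y.1+y.2).factorial := by
      have h := Nat.choose_mul_factorial_mul_factorial (Nat.le_add_right y.1 y.2)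
      rwa [Nat.add_sub_cancel_left] at h
    have h1 : (y.1.factorial : ℚ) ≠ 0 := by exact_mod_cast Nat.factorial_ne_zero _
    have h2 : (y.2.factorial : ℚ) ≠ 0 := by exact_mod_cast Nat.factorial_ne_zero _
    have h3 : (((y.1+y.2).factorial : ℕ) : ℚ) ≠ 0 := by exact_mod_cast Nat.factorial_ne_zero _
    have hc : (((y.1+y.2).choose y.1 : ℕ) : ℚ) * (y.1.factorial : ℚ) * (y.2.factorial : ℚ)
        = (((y.1+y.2).factorial : ℕ) : ℚ) := by exact_mod_cast hfac
    rw [← hy']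
    field_simp
    linear_combination hc
  have LHS_eq : (PowerSeries.coeff k (expOp D)) (p * q)
      = ∑ m ∈ Finset.range (k+1), ∑ y ∈ Finset.HasAntidiagonal.antidiagonal m, F y := by
    rw [coeff_expOp_apply]
    refine Finset.sum_congr rfl fun m _ => ?_
    rw [← actD_pow_C, map_mul, actD_pow_mul hder m, map_sum, Finset.smul_sum]
    refine Finset.sum_congr rfl fun y hy => ?_
    rw [map_nsmul]
    exact scal m y hy _
  have hFzero : ∀ y : ℕ × ℕ, k < y.1 + y.2 → F y = 0 := by
    intro y hy
    rw [hF]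
    simp only []
    rw [coeff_mul_pow_eq_zero h0 p q hy, smul_zero]
  have sq : ∑ m ∈ Finset.range (k+1), ∑ y ∈ Finset.HasAntidiagonal.antidiagonal m, F y
      = ∑ y ∈ Finset.range (k+1) ×ˢ Finset.range (k+1), F y := by
    rw [← Finset.sum_biUnion (by
      intro m1 h1 m2 h2 hne
      simp only [Function.onFun]
      rw [Finset.disjoint_left]
      intro y hy1 hy2
      have := Finset.HasAntidiagonal.mem_antidiagonal.mp hy1
      have := Finset.HasAntidiagonal.mem_antidiagonal.mp hy2
      exact hne (by omega))]
    apply Finset.sum_subset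
    · intro y hy
      rw [Finset.mem_biUnion] at hy
      obtain ⟨m, hm, hym⟩ := hy
      have h1 := Finset.mem_range.mp hm
      have h2 := Finset.HasAntidiagonal.mem_antidiagonal.mp hym
      rw [Finset.mem_product, Finset.mem_range, Finset.mem_range]
      omega
    · intro y hy hyn
      refine hFzero y ?_
      by_contra hc
      push_neg at hc
      exact hyn (Finset.mem_biUnion.mpr ⟨y.1 + y.2, Finset.mem_range.mpr (by omega),
        Finset.HasAntidiagonal.mem_antidiagonal.mpr rfl⟩)
  have RHS_eq : ∑ y ∈ Finset.HasAntidiagonal.antidiagonal k,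
        (PowerSeries.coeff y.1 (expOp D)) p
          * (PowerSeries.coeff y.2 (expOp D)) q
      = ∑ y ∈ Finset.range (k+1) ×ˢ Finset.range (k+1), F y := by
    have expand : ∀ y : ℕ × ℕ, y ∈ Finset.HasAntidiagonal.antidiagonal k →
        (PowerSeries.coeff y.1 (expOp D)) p
            * (PowerSeries.coeff y.2 (expOp D)) q
          = ∑ z ∈ Finset.range (k+1) ×ˢ Finset.range (k+1),
              (((z.1.factorial : ℚ))⁻¹ * ((z.2.factorial : ℚ))⁻¹) •
                (PowerSeries.coeff y.1 ((actD D ^ z.1) (PowerSeries.C p))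
                  * PowerSeries.coeff y.2 ((actD D ^ z.2) (PowerSeries.C q))) := by
      intro y hy
      have hy' := Finset.HasAntidiagonal.mem_antidiagonal.mp hy
      rw [coeff_expOp_apply_ext h0 p (by omega : y.1 ≤ k),
        coeff_expOp_apply_ext h0 q (by omega : y.2 ≤ k), Finset.sum_mul_sum,
        Finset.sum_product]
      refine Finset.sum_congr rfl fun a _ => Finset.sum_congr rfl fun b _ => ?_
      rw [actD_pow_C, actD_pow_C, smul_mul_assoc, mul_smul_comm, smul_smul]
    rw [Finset.sum_congr rfl expand, Finset.sum_comm]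
    refine Finset.sum_congr rfl fun z _ => ?_
    rw [← Finset.smul_sum, hF]
    simp only []
    rw [PowerSeries.coeff_mul]
  rw [LHS_eq, sq, RHS_eq]

lemma hq_zero : hq 0 = 1 := by rw [hq]

lemma X_mem_adjoin : ∀ n, (MvPolynomial.X n : Bq) ∈ Algebra.adjoin ℚ (Set.range hq) := by
  intro n
  induction n using Nat.strong_induction_on with
  | _ n IH =>
    have h := hq_succ_smul n
    rw [Finset.sum_range_succ, Nat.sub_self, hq_zero, mul_one] at h
    have hx : ((n:ℚ)+1) • (MvPolynomial.X n : Bq)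
        = ((n:ℚ)+1) • hq (n+1)
          - ∑ i ∈ Finset.range n, ((i:ℚ)+1) • (MvPolynomial.X i * hq (n - i)) := by
      rw [h]; abel
    have mem1 : ((n:ℚ)+1) • (MvPolynomial.X n : Bq) ∈ Algebra.adjoin ℚ (Set.range hq) := by
      rw [hx]
      apply Subalgebra.sub_mem
      · exact Subalgebra.smul_mem _ (Algebra.subset_adjoin (Set.mem_range_self (n+1))) _
      · apply Subalgebra.sum_mem
        intro i hi
        exact Subalgebra.smul_mem _ (Subalgebra.mul_mem _ (IH i (Finset.mem_range.mp hi))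
          (Algebra.subset_adjoin (Set.mem_range_self (n-i)))) _
    have h2 := Subalgebra.smul_mem _ mem1 (((n:ℚ)+1)⁻¹)
    rwa [smul_smul, inv_mul_cancel₀ (by positivity), one_smul] at h2

lemma mem_adjoin_hq (p : Bq) : p ∈ Algebra.adjoin ℚ (Set.range hq) := by
  induction p using MvPolynomial.induction_on with
  | C a => exact Subalgebra.algebraMap_mem _ a
  | add p q hp hq => exact Subalgebra.add_mem _ hp hq
  | mul_X p n hp => exact Subalgebra.mul_mem _ hp (X_mem_adjoin n)

lemma constantCoeff_Dxq : PowerSeries.constantCoeff Dxq = 0 := by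
  rw [← PowerSeries.coeff_zero_eq_constantCoeff, Dxq, PowerSeries.coeff_mk, if_pos rfl]

lemma constantCoeff_negDxq : PowerSeries.constantCoeff (-Dxq) = 0 := by
  rw [map_neg, constantCoeff_Dxq, neg_zero]

lemma hder_Dxq : ∀ (j : ℕ) (p q : Bq), (PowerSeries.coeff j Dxq) (p*q)
    = p * (PowerSeries.coeff j Dxq) q
      + ((PowerSeries.coeff j Dxq) p) * q := by
  intro j p q
  rw [Dxq, PowerSeries.coeff_mk]
  by_cases hj : j = 0
  · simp [hj]
  · rw [if_neg hj]
    simp only [LinearMap.smul_apply]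
    have hpd : ∀ x : Bq, pd (j-1) x = (MvPolynomial.pderiv (j-1)) x := fun _ => rfl
    rw [hpd, hpd, hpd, MvPolynomial.pderiv_mul, smul_add, smul_mul_assoc, mul_smul_comm]
    ring

lemma hder_negDxq : ∀ (j : ℕ) (p q : Bq), (PowerSeries.coeff j (-Dxq)) (p*q)
    = p * (PowerSeries.coeff j (-Dxq)) q
      + ((PowerSeries.coeff j (-Dxq)) p) * q := by
  intro j p q
  rw [map_neg, LinearMap.neg_apply, LinearMap.neg_apply, LinearMap.neg_apply, hder_Dxq]
  ring

lemma coeff_expOp_negDxq_hq (k n : ℕ) :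
    (PowerSeries.coeff k (expOp (-Dxq))) (hq n)
      = if k = 0 then hq n else if k = 1 then -hqz ((n:ℤ)-1) else 0 := by
  rw [← hqz_ofNat n, coeff_expOp_hqz coeff_negDxq_hqz k (n:ℤ), eC_neg k]
  by_cases hk : k = 0
  · subst hk
    rw [if_pos rfl, if_pos rfl, one_smul]
    simp [hqz_ofNat]
  · by_cases hk1 : k = 1
    · subst hk1
      rw [if_neg hk, if_pos rfl, if_neg hk, if_pos rfl, neg_smul, one_smul]
      norm_num
    · rw [if_neg hk, if_neg hk1, if_neg hk, if_neg hk1, zero_smul]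

lemma coeff_expOp_Dxq_hq (k n : ℕ) :
    (PowerSeries.coeff k (expOp Dxq)) (hq n) = hqz ((n:ℤ)-k) := by
  rw [← hqz_ofNat n, coeff_expOp_hqz coeff_Dxq_hqz k (n:ℤ), eC_one k, one_smul]

lemma key_ext (D : PowerSeries (Module.End ℚ Bq)) (T : Bq →ₐ[ℚ] Polynomial Bq)
    (h0 : PowerSeries.constantCoeff D = 0)
    (hder : ∀ (j : ℕ) (p q : Bq), (PowerSeries.coeff j D) (p*q)
      = p * (PowerSeries.coeff j D) q
        + ((PowerSeries.coeff j D) p) * q)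
    (hval : ∀ n k, (T (hq n)).coeff k = (PowerSeries.coeff k (expOp D)) (hq n)) :
    ∀ (p : Bq) (k : ℕ), (T p).coeff k = (PowerSeries.coeff k (expOp D)) p := by
  intro p
  have hp := mem_adjoin_hq p
  induction hp using Algebra.adjoin_induction with
  | mem x hx =>
    obtain ⟨n, rfl⟩ := hx
    exact fun k => hval n k
  | algebraMap r =>
    intro k
    have h1 : (algebraMap ℚ Bq) r = r • hq 0 := by
      rw [hq_zero, Algebra.algebraMap_eq_smul_one]
    rw [h1, map_smul, Polynomial.coeff_smul, map_smul, hval 0 k]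
  | add x y hxm hym ihx ihy =>
    intro k
    rw [map_add, Polynomial.coeff_add, map_add, ihx k, ihy k]
  | mul x y hxm hym ihx ihy =>
    intro k
    rw [map_mul, Polynomial.coeff_mul, coeff_expOp_mul h0 hder]
    exact Finset.sum_congr rfl fun y' _ => by rw [ihx y'.1, ihy y'.2]

/--
Bosonic expression of the vertex operators: let `B = ℚ[x₁,x₂,…]` with
`Σ_{n≥0} h_n z^n = exp(Σ_{i≥1} x_i z^i)`.  Then, as operators `B → B[[z^{-1}]]`,
`σ̄₋(z) = exp(-Σ_{i≥1} (1/(i zⁱ)) ∂/∂x_i)` and `σ₋(z) = exp(Σ_{i≥1} (1/(i zⁱ)) ∂/∂x_i)`,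
where `σ₋(z), σ̄₋(z)` are the ring homomorphisms determined by
`σ₋(z)h_n = Σ_{j=0}^n h_{n-j}z^{-j}` and `σ̄₋(z)h_n = h_n - h_{n-1}z^{-1}`.
Consequently the operators `Γ(z)p = (1/E_∞(z))·σ̄₋(z)p` and `Γ*(z)p = E_∞(z)·σ₋(z)p`
(`1/E_∞(z) = Σ h_n z^n`, `E_∞(z) = Σ g_m z^m = exp(-Σ x_i z^i)`) satisfy
`Γ(z) = exp(Σ x_i zⁱ) exp(-Σ (1/(i zⁱ)) ∂/∂x_i)` and
`Γ*(z) = exp(-Σ x_i zⁱ) exp(Σ (1/(i zⁱ)) ∂/∂x_i)`, coefficient by coefficient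
(coefficient of `z^t`, `t : ℤ`).
-/
theorem bosonic_vertex_operators
    (S Sb : Bq →ₐ[ℚ] Polynomial Bq)
    (hS : ∀ n : ℕ, S (hq n) =
      ∑ j ∈ Finset.range (n + 1), Polynomial.C (hq (n - j)) * Polynomial.X ^ j)
    (hSb : ∀ n : ℕ, Sb (hq n) =
      Polynomial.C (hq n) - Polynomial.C (hqz ((n : ℤ) - 1)) * Polynomial.X) :
    (∀ (p : Bq) (k : ℕ),
      (Sb p).coeff k = PowerSeries.coeff k (expOp (-Dxq)) p) ∧
    (∀ (p : Bq) (k : ℕ),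
      (S p).coeff k = PowerSeries.coeff k (expOp Dxq) p) ∧
    (∀ (p : Bq) (t : ℤ),
      (∑ᶠ (n : ℕ) (k : ℕ),
        if (n : ℤ) - (k : ℤ) = t then hq n * (Sb p).coeff k else 0) =
      ∑ᶠ (n : ℕ) (k : ℕ),
        if (n : ℤ) - (k : ℤ) = t then hq n * (PowerSeries.coeff k (expOp (-Dxq)) p)
        else 0) ∧
    (∀ (p : Bq) (t : ℤ),
      (∑ᶠ (m : ℕ) (q : ℕ),
        if (m : ℤ) - (q : ℤ) = t then gq m * (S p).coeff q else 0) =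
      ∑ᶠ (m : ℕ) (q : ℕ),
        if (m : ℤ) - (q : ℤ) = t then gq m * (PowerSeries.coeff q (expOp Dxq) p)
        else 0) := by
  
  have hvalSb : ∀ n k, (Sb (hq n)).coeff k
      = (PowerSeries.coeff k (expOp (-Dxq))) (hq n) := by
    intro n k
    rw [hSb n, coeff_expOp_negDxq_hq k n, Polynomial.coeff_sub, Polynomial.coeff_C,
      Polynomial.coeff_C_mul, Polynomial.coeff_X]
    by_cases hk : k = 0
    · subst hk; simp
    · by_cases hk1 : k = 1
      · subst hk1; simp
      · rw [if_neg hk, if_neg (show ¬ (1:ℕ) = k from fun h => hk1 h.symm), if_neg hk,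
          if_neg hk1, mul_zero, zero_sub, neg_zero]
  have hvalS : ∀ n k, (S (hq n)).coeff k
      = (PowerSeries.coeff k (expOp Dxq)) (hq n) := by
    intro n k
    rw [hS n, coeff_expOp_Dxq_hq k n, Polynomial.finset_sum_coeff]
    have hterm : ∀ j ∈ Finset.range (n+1),
        (Polynomial.C (hq (n-j)) * Polynomial.X ^ j).coeff k
          = if k = j then hq (n-j) else 0 := by
      intro j _
      rw [Polynomial.coeff_C_mul, Polynomial.coeff_X_pow]
      by_cases h : k = j
      · rw [if_pos h, if_pos h, mul_one]
      · rw [if_neg h, if_neg h, mul_zero]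
    rw [Finset.sum_congr rfl hterm, Finset.sum_ite_eq (Finset.range (n+1)) k (fun j => hq (n-j))]
    by_cases hk : k ≤ n
    · rw [if_pos (Finset.mem_range.mpr (by omega)), hqz, if_pos (by omega)]
      congr 1
      omega
    · rw [if_neg (fun h => hk (by have := Finset.mem_range.mp h; omega)), hqz,
        if_neg (by omega)]
  have hSbkey := key_ext (-Dxq) Sb constantCoeff_negDxq hder_negDxq hvalSb
  have hSkey := key_ext Dxq S constantCoeff_Dxq hder_Dxq hvalS
  exact ⟨hSbkey, hSkey,
    fun p t => finsum_congr fun n => finsum_congr fun k => by rw [hSbkey p k],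
    fun p t => finsum_congr fun m => finsum_congr fun q' => by rw [hSkey p q']⟩
end
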